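/- arXiv:1510.01947 — 12 statements merged into one kernel-verified Lean document; each statement's English description precedes it below -/
import Mathlib

section
/- Let R>0 and f:[0,R)→ℝ be continuously differentiable with f(0)>0, f'(0)=-1, f' convex and strictly increasing, and f(t)=0 for some t∈(0,R). Then f has a smallest root t* ∈ (0,R), and for all t ∈ [0,t*) one has f(t)>0, f'(t)<0, and t < t - f(t)/f'(t) < t*. -/
/-!
The zeros of `f` in `[0, t₀]` form a compact set, so there is a first one `t*`, and by the
intermediate value theorem `f > 0` before it. For `t < t*` the mean value theorem gives
`c ∈ (t, t*)` with `f' c = -f t / (t* - t) < 0`; since `f'` is strictly increasing,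
`f' t < f' c`, which yields both `f' t < 0` and `-f t / f' t < t* - t`.
-/

open Set

lemma exists_isLeast_zero_Icc {f : ℝ → ℝ} {a b : ℝ} (hab : a ≤ b)
    (hf : ContinuousOn f (Icc a b)) (hb : f b = 0) :
    ∃ c, IsLeast (Icc a b ∩ f ⁻¹' {0}) c := by
  have hclosed : IsClosed (Icc a b ∩ f ⁻¹' {0}) :=
    hf.preimage_isClosed_of_isClosed isClosed_Icc isClosed_singleton
  exact (isCompact_Icc.of_isClosed_subset hclosed inter_subset_left).exists_isLeast
    ⟨b, ⟨hab, le_rfl⟩, hb⟩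

lemma ContinuousOn.pos_of_pos_of_forall_ne_zero {f : ℝ → ℝ} {a b : ℝ} (hab : a ≤ b)
    (hf : ContinuousOn f (Icc a b)) (ha : 0 < f a) (hne : ∀ t ∈ Ioc a b, f t ≠ 0) :
    0 < f b := by
  by_contra! hb
  obtain ⟨c, hc, hfc⟩ := intermediate_value_Icc' hab hf ⟨hb, ha.le⟩
  have hac : a ≠ c := by rintro rfl; exact ha.ne' hfc
  exact hne c ⟨lt_of_le_of_ne hc.1 hac, hc.2⟩ hfc

lemma newton_step_mem_Ioo {f f' : ℝ → ℝ} {a b : ℝ} (hab : a < b)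
    (hf : ContinuousOn f (Icc a b)) (hderiv : ∀ x ∈ Ioo a b, HasDerivAt f (f' x) x)
    (hmono : StrictMonoOn f' (Ico a b)) (ha : 0 < f a) (hb : f b = 0) :
    f' a < 0 ∧ a - f a / f' a ∈ Ioo a b := by
  obtain ⟨c, hc, hslope⟩ := exists_hasDerivAt_eq_slope f f' hab hf hderiv
  have hba : 0 < b - a := sub_pos.mpr hab
  have hf'c : f' c = -f a / (b - a) := by rw [hslope, hb, zero_sub]
  have hlt : f' a < f' c := hmono (left_mem_Ico.mpr hab) (Ioo_subset_Ico_self hc) hc.1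
  have hf'a : f' a < 0 := hlt.trans (hf'c ▸ div_neg_of_neg_of_pos (neg_neg_of_pos ha) hba)
  have hkey : f' a * (b - a) < -f a := by
    rwa [hf'c, lt_div_iff₀ hba] at hlt
  refine ⟨hf'a, ?_, ?_⟩
  · linarith [div_neg_of_pos_of_neg ha hf'a]
  · have : -f a / f' a < b - a := by rw [div_lt_iff_of_neg hf'a]; linarith
    rw [neg_div] at this
    linarith

theorem stmt0_general (R : ℝ) (f f' : ℝ → ℝ)
    (hderiv : ∀ t ∈ Ico (0:ℝ) R, HasDerivWithinAt f (f' t) (Ico 0 R) t)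
    (h1 : 0 < f 0)
    (h2mono : StrictMonoOn f' (Ico 0 R))
    (h3 : ∃ t ∈ Ioo (0:ℝ) R, f t = 0) :
    ∃ tstar ∈ Ioo (0:ℝ) R, f tstar = 0 ∧
      (∀ t ∈ Ioo (0:ℝ) R, f t = 0 → tstar ≤ t) ∧
      ∀ t ∈ Ico (0:ℝ) tstar,
        0 < f t ∧ f' t < 0 ∧ t < t - f t / f' t ∧ t - f t / f' t < tstar := by
  obtain ⟨t₀, ht₀, hft₀⟩ := h3
  have hfc : ContinuousOn f (Ico 0 R) := fun t ht => (hderiv t ht).continuousWithinAt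
  have hIcc : ∀ {a b}, 0 ≤ a → b < R → Icc a b ⊆ Ico 0 R :=
    fun ha hb x hx => ⟨ha.trans hx.1, hx.2.trans_lt hb⟩
  obtain ⟨ts, ⟨⟨hts0, hts₀⟩, hfts⟩, hleast⟩ :=
    exists_isLeast_zero_Icc ht₀.1.le (hfc.mono (hIcc le_rfl ht₀.2)) hft₀
  have htsR : ts < R := hts₀.trans_lt ht₀.2
  have hmin : ∀ t ∈ Ioo (0:ℝ) R, f t = 0 → ts ≤ t := fun t ht hft =>
    (le_total t t₀).elim (fun h => hleast ⟨⟨ht.1.le, h⟩, hft⟩) fun h => hts₀.trans h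
  have htspos : 0 < ts := lt_of_le_of_ne hts0 (by rintro rfl; exact h1.ne' hfts)
  refine ⟨ts, ⟨htspos, htsR⟩, hfts, hmin, fun t ht => ?_⟩
  have htR : t < R := ht.2.trans htsR
  have hft : 0 < f t := by
    refine (hfc.mono (hIcc le_rfl htR)).pos_of_pos_of_forall_ne_zero ht.1 h1 fun s hs hfs => ?_
    exact (hmin s ⟨hs.1, hs.2.trans_lt htR⟩ hfs).not_gt (hs.2.trans_lt ht.2)
  obtain ⟨hf't, hstep⟩ := newton_step_mem_Ioo ht.2 (hfc.mono (hIcc ht.1 htsR))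
    (fun x hx => (hderiv x ⟨ht.1.trans hx.1.le, hx.2.trans htsR⟩).hasDerivAt
      (Ico_mem_nhds (ht.1.trans_lt hx.1) (hx.2.trans htsR)))
    (h2mono.mono fun x hx => ⟨ht.1.trans hx.1, hx.2.trans htsR⟩) hft hfts
  exact ⟨hft, hf't, hstep.1, hstep.2⟩

/-- a majorant function has a smallest root `t*` in `(0,R)`, and on
`[0,t*)` one has `f t > 0`, `f' t < 0` and `t < t - f t / f' t < t*`. -/
theorem stmt0 (R : ℝ) (hR : 0 < R) (f f' : ℝ → ℝ)
    (hderiv : ∀ t ∈ Ico (0:ℝ) R, HasDerivWithinAt f (f' t) (Ico 0 R) t)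
    (hcont : ContinuousOn f' (Ico 0 R))
    (h1 : 0 < f 0) (h1' : f' 0 = -1)
    (h2conv : ConvexOn ℝ (Ico 0 R) f')
    (h2mono : StrictMonoOn f' (Ico 0 R))
    (h3 : ∃ t ∈ Ioo (0:ℝ) R, f t = 0) :
    ∃ tstar ∈ Ioo (0:ℝ) R, f tstar = 0 ∧
      (∀ t ∈ Ioo (0:ℝ) R, f t = 0 → tstar ≤ t) ∧
      ∀ t ∈ Ico (0:ℝ) tstar,
        0 < f t ∧ f' t < 0 ∧ t < t - f t / f' t ∧ t - f t / f' t < tstar :=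
  stmt0_general R f f' hderiv h1 h2mono h3
end

section
/- Let f be a majorant function on [0,R) (f(0)>0, f'(0)=-1, f' convex and strictly increasing, f has a zero in (0,R)) with smallest root t*. Then f is strictly convex on [0,R), f'(t*) ≤ 0, and f'(t*) < 0 if and only if there exists t ∈ (t*, R) with f(t) < 0. -/
/-!
Strict convexity of `f` is the strict monotonicity of `f'`. Since `f > 0` on `[0, t*)` and
`f t* = 0`, the left difference quotients at `t*` are negative, so `f' t* ≤ 0`. If `f' t* < 0`,
`f` keeps decreasing just after `t*`; if `f' t* = 0`, the tangent at `t*` is the horizontal line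
`0`, which the convex `f` stays above.
-/

open Set

lemma HasDerivWithinAt.nonpos_of_le_left {f : ℝ → ℝ} {f' a x : ℝ} {s : Set ℝ}
    (hf : HasDerivWithinAt f f' s x) (hax : a < x) (hs : Ioo a x ⊆ s)
    (hle : ∀ y ∈ Ioo a x, f x ≤ f y) : f' ≤ 0 := by
  have := right_nhdsWithin_Ioo_neBot hax
  refine le_of_tendsto ((hasDerivWithinAt_iff_tendsto_slope' (by simp)).1 (hf.mono hs))
    (eventually_mem_nhdsWithin.mono fun y hy => ?_)
  rw [slope_comm, slope_nonpos_iff_of_le hy.2.le]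
  exact hle y hy

lemma HasDerivWithinAt.exists_lt_right_of_neg {f : ℝ → ℝ} {f' x b : ℝ} {s : Set ℝ}
    (hf : HasDerivWithinAt f f' s x) (hxb : x < b) (hs : Ioo x b ⊆ s) (hneg : f' < 0) :
    ∃ y ∈ Ioo x b, f y < f x := by
  have := left_nhdsWithin_Ioo_neBot hxb
  have hslope := (hasDerivWithinAt_iff_tendsto_slope' (by simp)).1 (hf.mono hs)
  obtain ⟨y, hy, hneg⟩ :=
    (eventually_mem_nhdsWithin.and (hslope.eventually (eventually_lt_nhds hneg))).exists
  exact ⟨y, hy, (slope_neg_iff_of_le hy.1.le).1 hneg⟩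

lemma strictConvexOn_of_hasDerivWithinAt_strictMonoOn {D : Set ℝ} (hD : Convex ℝ D)
    {f f' : ℝ → ℝ} (hf : ∀ x ∈ D, HasDerivWithinAt f (f' x) D x)
    (hf' : StrictMonoOn f' D) :
    StrictConvexOn ℝ D f := by
  refine StrictMonoOn.strictConvexOn_of_deriv hD
    (fun x hx => (hf x hx).continuousWithinAt) fun x hx y hy hxy => ?_
  have hderiv : ∀ z ∈ interior D, deriv f z = f' z := fun z hz =>
    ((hf z (interior_subset hz)).hasDerivAt (mem_interior_iff_mem_nhds.1 hz)).deriv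
  rw [hderiv x hx, hderiv y hy]
  exact hf' (interior_subset hx) (interior_subset hy) hxy

lemma ContinuousOn.pos_of_ne_zero_Ioc {f : ℝ → ℝ} {a b : ℝ} (hf : ContinuousOn f (Icc a b))
    (hab : a ≤ b) (ha : 0 < f a) (hne : ∀ x ∈ Ioc a b, f x ≠ 0) : 0 < f b := by
  by_contra! hb
  obtain ⟨c, hc, hfc⟩ := intermediate_value_Icc' hab hf ⟨hb, ha.le⟩
  rcases hc.1.eq_or_lt with rfl | hac
  · exact ha.ne' hfc
  · exact hne c ⟨hac, hc.2⟩ hfc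

theorem stmt1_general (R : ℝ) (f f' : ℝ → ℝ)
    (hderiv : ∀ t ∈ Ico (0:ℝ) R, HasDerivWithinAt f (f' t) (Ico 0 R) t)
    (h1 : 0 < f 0)
    (h2mono : StrictMonoOn f' (Ico 0 R))
    (tstar : ℝ) (htstar : tstar ∈ Ioo (0:ℝ) R) (hroot : f tstar = 0)
    (hmin : ∀ t ∈ Ioo (0:ℝ) R, f t = 0 → tstar ≤ t) :
    StrictConvexOn ℝ (Ico (0:ℝ) R) f ∧ f' tstar ≤ 0 ∧
      (f' tstar < 0 ↔ ∃ t ∈ Ioo tstar R, f t < 0) := by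
  obtain ⟨ht0, htR⟩ := htstar
  have hconvex : StrictConvexOn ℝ (Ico 0 R) f :=
    strictConvexOn_of_hasDerivWithinAt_strictMonoOn (convex_Ico 0 R) hderiv h2mono
  have hcont : ContinuousOn f (Ico 0 R) := fun t ht => (hderiv t ht).continuousWithinAt
  have hpos : ∀ t ∈ Ico 0 tstar, 0 < f t := fun t ht =>
    (hcont.mono (Icc_subset_Ico_right (ht.2.trans htR))).pos_of_ne_zero_Ioc ht.1 h1
      fun x hx hfx =>
        (hx.2.trans_lt ht.2).not_ge (hmin x ⟨hx.1, hx.2.trans_lt (ht.2.trans htR)⟩ hfx)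
  have hderiv_tstar := hderiv tstar ⟨ht0.le, htR⟩
  refine ⟨hconvex, ?_, fun hneg => ?_, ?_⟩
  · exact hderiv_tstar.nonpos_of_le_left ht0
      (Ioo_subset_Ico_self.trans (Ico_subset_Ico_right htR.le)) fun y hy =>
        hroot ▸ (hpos y (Ioo_subset_Ico_self hy)).le
  · obtain ⟨t, ht, hft⟩ := hderiv_tstar.exists_lt_right_of_neg htR
      (Ioo_subset_Ico_self.trans (Ico_subset_Ico_left ht0.le)) hneg
    exact ⟨t, ht, hroot ▸ hft⟩
  · rintro ⟨t, ht, hft⟩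
    by_contra! hnonneg
    have hslope := hconvex.convexOn.le_slope_of_hasDerivWithinAt ⟨ht0.le, htR⟩
      ⟨ht0.le.trans ht.1.le, ht.2⟩ ht.1 hderiv_tstar
    exact hft.not_ge (hroot ▸ (slope_nonneg_iff_of_le ht.1.le).1 (hnonneg.trans hslope))

/-- a majorant function is strictly convex, `f'(t*) ≤ 0`, and
`f'(t*) < 0` iff `f` is negative somewhere in `(t*,R)`. -/
theorem stmt1 (R : ℝ) (hR : 0 < R) (f f' : ℝ → ℝ)
    (hderiv : ∀ t ∈ Ico (0:ℝ) R, HasDerivWithinAt f (f' t) (Ico 0 R) t)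
    (hcont : ContinuousOn f' (Ico 0 R))
    (h1 : 0 < f 0) (h1' : f' 0 = -1)
    (h2conv : ConvexOn ℝ (Ico 0 R) f')
    (h2mono : StrictMonoOn f' (Ico 0 R))
    (tstar : ℝ) (htstar : tstar ∈ Ioo (0:ℝ) R) (hroot : f tstar = 0)
    (hmin : ∀ t ∈ Ioo (0:ℝ) R, f t = 0 → tstar ≤ t) :
    StrictConvexOn ℝ (Ico (0:ℝ) R) f ∧ f' tstar ≤ 0 ∧
      (f' tstar < 0 ↔ ∃ t ∈ Ioo tstar R, f t < 0) :=
  stmt1_general R f f' hderiv h1 h2mono tstar htstar hroot hmin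
end

section
/- Let f be a majorant function on [0,R) satisfying additionally f(t)<0 for some t∈(0,R). Define t̄ := sup{ t ∈ [0,R) : f'(t) < 0 } and β := sup{ -f(t) : t ∈ [0,R) }. Then f'(t) < 0 for every t ∈ [0, t̄), 0 < t* < t̄ ≤ R, β = -lim_{t→t̄⁻} f(t), and 0 < β < t̄. -/
open Set Filter Topology

/-!
Since `f'` is increasing, `{t | f' t < 0}` is the interval `[0, t̄)`, so `f` decreases on `[0, t̄)`
and increases on `[t̄, R)`; hence the infimum `-β` of `f` is its left limit at `t̄`. By the
intermediate value theorem and the minimality of `t*`, the negative value of `f` is taken beyond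
`t*`; as `f t* = 0` and `f` increases on `[t̄, R)`, this forces `t* < t̄`. Finally
`f' ≥ f' 0 = -1` gives `f t ≥ f 0 - t`, whence `β ≤ t̄ - f 0 < t̄`.
-/

section Derivative

variable {D I : Set ℝ} {f f' : ℝ → ℝ}

theorem hasDerivWithinAt_interior_of_subset (hf : ∀ x ∈ D, HasDerivWithinAt f (f' x) D x)
    (hID : I ⊆ D) : ∀ x ∈ interior I, HasDerivWithinAt f (f' x) (interior I) x := fun x hx =>
  ((hf x (hID (interior_subset hx))).hasDerivAt
    (mem_of_superset (isOpen_interior.mem_nhds hx) (interior_subset.trans hID))).hasDerivWithinAt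

theorem continuousOn_of_hasDerivWithinAt (hf : ∀ x ∈ D, HasDerivWithinAt f (f' x) D x) :
    ContinuousOn f D := fun x hx => (hf x hx).continuousWithinAt

theorem monotoneOn_of_hasDerivWithinAt_of_subset (hf : ∀ x ∈ D, HasDerivWithinAt f (f' x) D x)
    (hI : Convex ℝ I) (hID : I ⊆ D) (hf'₀ : ∀ x ∈ interior I, 0 ≤ f' x) : MonotoneOn f I :=
  monotoneOn_of_hasDerivWithinAt_nonneg hI ((continuousOn_of_hasDerivWithinAt hf).mono hID)
    (hasDerivWithinAt_interior_of_subset hf hID) hf'₀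

theorem antitoneOn_of_hasDerivWithinAt_of_subset (hf : ∀ x ∈ D, HasDerivWithinAt f (f' x) D x)
    (hI : Convex ℝ I) (hID : I ⊆ D) (hf'₀ : ∀ x ∈ interior I, f' x ≤ 0) : AntitoneOn f I :=
  antitoneOn_of_hasDerivWithinAt_nonpos hI ((continuousOn_of_hasDerivWithinAt hf).mono hID)
    (hasDerivWithinAt_interior_of_subset hf hID) hf'₀

theorem Convex.mul_sub_le_image_sub_of_le_hasDerivWithinAt (hD : Convex ℝ D)
    (hf : ∀ x ∈ D, HasDerivWithinAt f (f' x) D x) {C : ℝ} (hC : ∀ x ∈ interior D, C ≤ f' x) :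
    ∀ x ∈ D, ∀ y ∈ D, x ≤ y → C * (y - x) ≤ f y - f x :=
  have hint := hasDerivWithinAt_interior_of_subset hf subset_rfl
  hD.mul_sub_le_image_sub_of_le_deriv (continuousOn_of_hasDerivWithinAt hf)
    (fun x hx => (hint x hx).differentiableWithinAt) fun x hx => by
      rw [deriv_eqOn isOpen_interior hint hx]
      exact hC x hx

theorem add_mul_sub_le_of_monotoneOn_deriv {a b : ℝ}
    (hf : ∀ x ∈ Ico a b, HasDerivWithinAt f (f' x) (Ico a b) x) (hf' : MonotoneOn f' (Ico a b))
    (hab : a < b) {t : ℝ} (ht : t ∈ Ico a b) : f a + f' a * (t - a) ≤ f t := by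
  have hge : ∀ x ∈ interior (Ico a b), f' a ≤ f' x := fun x hx => by
    rw [interior_Ico] at hx
    exact hf' ⟨le_rfl, hab⟩ (Ioo_subset_Ico_self hx) hx.1.le
  linarith [(convex_Ico a b).mul_sub_le_image_sub_of_le_hasDerivWithinAt hf hge
    a ⟨le_rfl, hab⟩ t ht ht.1]

end Derivative

theorem MonotoneOn.neg_of_lt_sSup {s : Set ℝ} {g : ℝ → ℝ} (hg : MonotoneOn g s)
    (hne : {x ∈ s | g x < 0}.Nonempty) {t : ℝ} (ht : t ∈ s) (hlt : t < sSup {x ∈ s | g x < 0}) :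
    g t < 0 :=
  let ⟨_, hu, htu⟩ := exists_lt_of_lt_csSup hne hlt
  (hg ht hu.1 htu.le).trans_lt hu.2

theorem nonneg_of_sSup_lt {g : ℝ → ℝ} {a b t : ℝ} (ht : t ∈ Ico a b)
    (hlt : sSup {x ∈ Ico a b | g x < 0} < t) : 0 ≤ g t :=
  not_lt.1 fun h => hlt.not_ge (le_csSup ⟨b, fun _ hx => hx.1.2.le⟩ ⟨ht, h⟩)

theorem sSup_sep_Ico_mem_Icc {p : ℝ → Prop} {a b : ℝ} (hab : a < b) (hp : p a) :
    sSup {x ∈ Ico a b | p x} ∈ Icc a b :=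
  ⟨le_csSup ⟨b, fun _ hx => hx.1.2.le⟩ ⟨⟨le_rfl, hab⟩, hp⟩,
    csSup_le ⟨a, ⟨le_rfl, hab⟩, hp⟩ fun _ hx => hx.1.2.le⟩

theorem MonotoneOn.lt_of_apply_lt {f : ℝ → ℝ} {b c x y : ℝ} (hf : MonotoneOn f (Ico c b))
    (hxy : x ≤ y) (hy : y < b) (hfxy : f y < f x) : x < c := by
  by_contra! h
  exact (hf ⟨h, hxy.trans_lt hy⟩ ⟨h.trans hxy, hy⟩ hxy).not_gt hfxy

theorem lt_of_mem_lowerBounds_zeros {f : ℝ → ℝ} {a b z : ℝ} (hab : a ≤ b)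
    (hf : ContinuousOn f (Icc a b)) (ha : 0 < f a) (hb : f b < 0)
    (hz : z ∈ lowerBounds {t ∈ Ioo a b | f t = 0}) : z < b := by
  obtain ⟨c, hc, hfc⟩ := intermediate_value_Ioo' hab hf ⟨hb, ha⟩
  exact (hz ⟨hc, hfc⟩).trans_lt hc.2

theorem tendsto_nhdsLT_sInf_of_antitoneOn_of_monotoneOn {f : ℝ → ℝ} {a b c : ℝ} (hac : a < c)
    (hcb : c ≤ b) (hf : ContinuousOn f (Ico a b)) (hanti : AntitoneOn f (Ico a c))
    (hmono : MonotoneOn f (Ico c b)) (hbdd : BddBelow (f '' Ico a b)) :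
    Tendsto f (𝓝[<] c) (𝓝 (sInf (f '' Ico a b))) := by
  have hne : (Ioo a c).Nonempty := nonempty_Ioo.2 hac
  have hsub : Ioo a c ⊆ Ico a b := Ioo_subset_Ico_self.trans (Ico_subset_Ico_right hcb)
  have hlim : Tendsto f (𝓝[<] c) (𝓝 (sInf (f '' Ioo a c))) :=
    (hanti.mono Ioo_subset_Ico_self).tendsto_nhdsWithin_Ioo_left hne
      (hbdd.mono (image_mono hsub))
  suffices hglb : IsGLB (f '' Ico a b) (sInf (f '' Ioo a c)) by
    rwa [hglb.csInf_eq ((hne.mono hsub).image f)]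
  refine ⟨?_, fun m hm => le_csInf (hne.image f) fun y hy => hm (image_mono hsub hy)⟩
  rintro _ ⟨t, ht, rfl⟩
  rcases lt_or_ge t c with htc | hct
  · refine le_of_tendsto hlim ?_
    filter_upwards [Ioo_mem_nhdsLT htc] with s hs
    exact hanti ⟨ht.1, htc⟩ ⟨ht.1.trans hs.1.le, hs.2⟩ hs.1.le
  · have hcb' : c < b := hct.trans_lt ht.2
    have hleft : Tendsto f (𝓝[<] c) (𝓝 (f c)) := by
      refine (hf c ⟨hac.le, hcb'⟩).tendsto.mono_left ?_
      rw [← nhdsWithin_Ico_eq_nhdsLT hac]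
      exact nhdsWithin_mono _ (Ico_subset_Ico_right hcb)
    rw [← tendsto_nhds_unique hleft hlim]
    exact hmono ⟨le_rfl, hcb'⟩ ⟨hct, ht.2⟩ hct

theorem stmt2_general (R : ℝ) (hR : 0 < R) (f f' : ℝ → ℝ)
    (hderiv : ∀ t ∈ Ico (0:ℝ) R, HasDerivWithinAt f (f' t) (Ico 0 R) t)
    (h1 : 0 < f 0) (h1' : f' 0 = -1)
    (h2mono : StrictMonoOn f' (Ico 0 R))
    (tstar : ℝ) (htstar : tstar ∈ Ioo (0:ℝ) R) (hroot : f tstar = 0)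
    (hmin : ∀ t ∈ Ioo (0:ℝ) R, f t = 0 → tstar ≤ t)
    (h4 : ∃ t ∈ Ioo (0:ℝ) R, f t < 0)
    (tbar : ℝ) (htbar : tbar = sSup {t ∈ Ico (0:ℝ) R | f' t < 0})
    (β : ℝ) (hβ : β = sSup ((fun t => -f t) '' Ico (0:ℝ) R)) :
    (∀ t ∈ Ico (0:ℝ) tbar, f' t < 0) ∧
      0 < tstar ∧ tstar < tbar ∧ tbar ≤ R ∧
      Tendsto f (𝓝[<] tbar) (𝓝 (-β)) ∧
      0 < β ∧ β < tbar := by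
  obtain ⟨t₀, ht₀, hft₀⟩ := h4
  have h0 : f' 0 < 0 := by rw [h1']; norm_num
  obtain ⟨htbar0, htbarR⟩ : tbar ∈ Icc 0 R := htbar ▸ sSup_sep_Ico_mem_Icc hR h0
  have hneg : ∀ t ∈ Ico (0:ℝ) tbar, f' t < 0 := fun t ht =>
    h2mono.monotoneOn.neg_of_lt_sSup ⟨0, ⟨le_rfl, hR⟩, h0⟩ ⟨ht.1, ht.2.trans_le htbarR⟩
      (htbar ▸ ht.2)
  have hanti : AntitoneOn f (Ico 0 tbar) :=
    antitoneOn_of_hasDerivWithinAt_of_subset hderiv (convex_Ico 0 tbar)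
      (Ico_subset_Ico_right htbarR) fun t ht => (hneg t (interior_subset ht)).le
  have hmono : MonotoneOn f (Ico tbar R) :=
    monotoneOn_of_hasDerivWithinAt_of_subset hderiv (convex_Ico tbar R)
      (Ico_subset_Ico_left htbar0) fun t ht => by
        rw [interior_Ico] at ht
        exact nonneg_of_sSup_lt ⟨htbar0.trans ht.1.le, ht.2⟩ (htbar ▸ ht.1)
  have hts₀ : tstar < t₀ :=
    lt_of_mem_lowerBounds_zeros ht₀.1.le ((continuousOn_of_hasDerivWithinAt hderiv).mono
      (Icc_subset_Ico_right ht₀.2)) h1 hft₀ fun t ht => hmin t ⟨ht.1.1, ht.1.2.trans ht₀.2⟩ ht.2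
  have htstbar : tstar < tbar := hmono.lt_of_apply_lt hts₀.le ht₀.2 (hroot ▸ hft₀)
  have hlow : ∀ t ∈ Ico (0:ℝ) R, f 0 - t ≤ f t := fun t ht => by
    have := add_mul_sub_le_of_monotoneOn_deriv hderiv h2mono.monotoneOn hR ht
    rw [h1'] at this
    linarith
  have hbdd : BddBelow (f '' Ico 0 R) :=
    ⟨f 0 - R, forall_mem_image.2 fun t ht => by linarith [hlow t ht, ht.2]⟩
  have hβinf : β = -sInf (f '' Ico 0 R) := by
    rw [hβ, ← Real.sSup_neg, ← image_neg_eq_neg, image_image]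
  have hlim : Tendsto f (𝓝[<] tbar) (𝓝 (-β)) := by
    rw [hβinf, neg_neg]
    exact tendsto_nhdsLT_sInf_of_antitoneOn_of_monotoneOn (htstar.1.trans htstbar) htbarR
      (continuousOn_of_hasDerivWithinAt hderiv) hanti hmono hbdd
  refine ⟨hneg, htstar.1, htstbar, htbarR, hlim, ?_, ?_⟩
  · rw [hβinf, neg_pos]
    exact (csInf_le hbdd ⟨t₀, Ioo_subset_Ico_self ht₀, rfl⟩).trans_lt hft₀
  · have : f 0 - tbar ≤ -β := ge_of_tendsto hlim <| by
      filter_upwards [Ioo_mem_nhdsLT (htstar.1.trans htstbar)] with s hs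
      linarith [hlow s ⟨hs.1.le, hs.2.trans_le htbarR⟩, hs.2]
    linarith

/-- under (h4), with `t̄ = sup{t : f' t < 0}` and `β = sup{-f t}`,
one has `f' < 0` on `[0,t̄)`, `0 < t* < t̄ ≤ R`, `β = -lim_{t→t̄⁻} f t` and `0 < β < t̄`. -/
theorem stmt2 (R : ℝ) (hR : 0 < R) (f f' : ℝ → ℝ)
    (hderiv : ∀ t ∈ Ico (0:ℝ) R, HasDerivWithinAt f (f' t) (Ico 0 R) t)
    (hcont : ContinuousOn f' (Ico 0 R))
    (h1 : 0 < f 0) (h1' : f' 0 = -1)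
    (h2conv : ConvexOn ℝ (Ico 0 R) f')
    (h2mono : StrictMonoOn f' (Ico 0 R))
    (tstar : ℝ) (htstar : tstar ∈ Ioo (0:ℝ) R) (hroot : f tstar = 0)
    (hmin : ∀ t ∈ Ioo (0:ℝ) R, f t = 0 → tstar ≤ t)
    (h4 : ∃ t ∈ Ioo (0:ℝ) R, f t < 0)
    (tbar : ℝ) (htbar : tbar = sSup {t ∈ Ico (0:ℝ) R | f' t < 0})
    (β : ℝ) (hβ : β = sSup ((fun t => -f t) '' Ico (0:ℝ) R)) :
    (∀ t ∈ Ico (0:ℝ) tbar, f' t < 0) ∧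
      0 < tstar ∧ tstar < tbar ∧ tbar ≤ R ∧
      Tendsto f (𝓝[<] tbar) (𝓝 (-β)) ∧
      0 < β ∧ β < tbar :=
  stmt2_general R hR f f' hderiv h1 h1' h2mono tstar htstar hroot hmin h4 tbar htbar β hβ
end

section
/- Let f be a majorant function on [0,R) satisfying (h4): f(t)<0 for some t∈(0,R), with β := sup{-f(t): t∈[0,R)} and t̄ := sup{t∈[0,R): f'(t)<0}. If 0 ≤ ρ < β/2 then ρ < t̄/2 and f'(ρ) < 0. -/
/-!
For `t ≤ t̄` the bound `f' ≥ f'(0) = -1` makes `f + id` nondecreasing, so `-f(t) < t ≤ t̄`;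
past `t̄` the derivative is nonnegative, so `f(t) ≥ f(t̄) > -t̄`. Hence `β ≤ t̄`, and
`ρ < β/2 ≤ t̄/2 < t̄` puts `ρ` below some point where `f'` is already negative.
-/

open Set

theorem monotoneOn_Ico_of_hasDerivWithinAt_nonneg {f f' : ℝ → ℝ} {a b : ℝ}
    (hf : ∀ t ∈ Ico a b, HasDerivWithinAt f (f' t) (Ico a b) t)
    (hf' : ∀ t ∈ Ioo a b, 0 ≤ f' t) : MonotoneOn f (Ico a b) :=
  monotoneOn_of_hasDerivWithinAt_nonneg (convex_Ico a b)
    (fun t ht => (hf t ht).continuousWithinAt)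
    (fun t ht => by
      rw [interior_Ico] at ht ⊢
      exact (hf t (Ioo_subset_Ico_self ht)).mono Ioo_subset_Ico_self)
    (by rwa [interior_Ico])

theorem neg_lt_of_neg_one_le_deriv_of_deriv_nonneg {f f' : ℝ → ℝ} {R T : ℝ}
    (hf : ∀ t ∈ Ico 0 R, HasDerivWithinAt f (f' t) (Ico 0 R) t) (hf0 : 0 < f 0)
    (hT : 0 ≤ T) (hf'_ge : ∀ t ∈ Ioo 0 R, -1 ≤ f' t)
    (hf'_nonneg : ∀ t ∈ Ioo T R, 0 ≤ f' t) {t : ℝ} (ht : t ∈ Ico 0 R) : -f t < T := by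
  have hg : MonotoneOn (fun s => f s + s) (Ico 0 R) :=
    monotoneOn_Ico_of_hasDerivWithinAt_nonneg (f' := fun s => f' s + 1)
      (fun s hs => (hf s hs).add (hasDerivWithinAt_id s _))
      (fun s hs => by linarith [hf'_ge s hs])
  have h0 : (0 : ℝ) ∈ Ico 0 R := ⟨le_rfl, ht.1.trans_lt ht.2⟩
  have hneg_lt_self : ∀ s ∈ Ico 0 R, -f s < s := fun s hs => by
    have := hg h0 hs hs.1
    simp only [add_zero] at this
    linarith
  rcases le_or_gt t T with hle | hlt
  · linarith [hneg_lt_self t ht]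
  · have hTR : T ∈ Ico 0 R := ⟨hT, hlt.trans ht.2⟩
    have hsub : Ico T R ⊆ Ico 0 R := Ico_subset_Ico_left hT
    have hmono : MonotoneOn f (Ico T R) :=
      monotoneOn_Ico_of_hasDerivWithinAt_nonneg (fun s hs => (hf s (hsub hs)).mono hsub)
        hf'_nonneg
    linarith [hneg_lt_self T hTR, hmono ⟨le_rfl, hTR.2⟩ ⟨hlt.le, ht.2⟩ hlt.le]

section SublevelSup

variable {α β : Type*} [ConditionallyCompleteLinearOrder α] {s : Set α} {x : α}

theorem MonotoneOn.lt_of_lt_sSup_setOf_lt [Preorder β] {g : α → β} {c : β}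
    (hg : MonotoneOn g s) (hne : {t ∈ s | g t < c}.Nonempty) (hx : x ∈ s)
    (hlt : x < sSup {t ∈ s | g t < c}) : g x < c := by
  obtain ⟨t, ⟨hts, hgt⟩, hxt⟩ := exists_lt_of_lt_csSup hne hlt
  exact (hg hx hts hxt.le).trans_lt hgt

theorem le_of_sSup_setOf_lt_lt [LinearOrder β] {g : α → β} {c : β} (hs : BddAbove s)
    (hx : x ∈ s) (hlt : sSup {t ∈ s | g t < c} < x) : c ≤ g x :=
  not_lt.mp fun hgx =>
    (le_csSup (BddAbove.mono (sep_subset _ _) hs) ⟨hx, hgx⟩).not_gt hlt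

end SublevelSup

theorem stmt3_general (R : ℝ) (hR : 0 < R) (f f' : ℝ → ℝ)
    (hderiv : ∀ t ∈ Ico (0:ℝ) R, HasDerivWithinAt f (f' t) (Ico 0 R) t)
    (h1 : 0 < f 0) (h1' : f' 0 = -1)
    (h2mono : StrictMonoOn f' (Ico 0 R))
    (tbar : ℝ) (htbar : tbar = sSup {t ∈ Ico (0:ℝ) R | f' t < 0})
    (β : ℝ) (hβ : β = sSup ((fun t => -f t) '' Ico (0:ℝ) R))
    (ρ : ℝ) (hρ0 : 0 ≤ ρ) (hρ : ρ < β / 2) :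
    ρ < tbar / 2 ∧ f' ρ < 0 := by
  have h0 : (0 : ℝ) ∈ Ico 0 R := ⟨le_rfl, hR⟩
  have h0S : (0 : ℝ) ∈ {t ∈ Ico (0:ℝ) R | f' t < 0} := ⟨h0, by rw [h1']; norm_num⟩
  have hbdd : BddAbove (Ico (0:ℝ) R) := bddAbove_Ico
  have htbar0 : 0 ≤ tbar := htbar ▸ le_csSup (BddAbove.mono (sep_subset _ _) hbdd) h0S
  have htbarR : tbar ≤ R := htbar ▸ csSup_le ⟨0, h0S⟩ fun t ht => ht.1.2.le
  have hneg_lt : ∀ t ∈ Ico 0 R, -f t < tbar := fun t ht =>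
    neg_lt_of_neg_one_le_deriv_of_deriv_nonneg hderiv h1 htbar0
      (fun s hs => h1' ▸ h2mono.monotoneOn h0 (Ioo_subset_Ico_self hs) hs.1.le)
      (fun s hs => le_of_sSup_setOf_lt_lt hbdd ⟨htbar0.trans hs.1.le, hs.2⟩ (htbar ▸ hs.1)) ht
  have hβ_le : β ≤ tbar :=
    hβ ▸ Real.sSup_le (by rintro _ ⟨t, ht, rfl⟩; exact (hneg_lt t ht).le) htbar0
  have hρ_lt : ρ < tbar / 2 := by linarith
  exact ⟨hρ_lt, h2mono.monotoneOn.lt_of_lt_sSup_setOf_lt ⟨0, h0S⟩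
    ⟨hρ0, by linarith⟩ (htbar ▸ by linarith)⟩

/-- if `0 ≤ ρ < β/2` then `ρ < t̄/2` and `f'(ρ) < 0`. -/
theorem stmt3 (R : ℝ) (hR : 0 < R) (f f' : ℝ → ℝ)
    (hderiv : ∀ t ∈ Ico (0:ℝ) R, HasDerivWithinAt f (f' t) (Ico 0 R) t)
    (hcont : ContinuousOn f' (Ico 0 R))
    (h1 : 0 < f 0) (h1' : f' 0 = -1)
    (h2conv : ConvexOn ℝ (Ico 0 R) f')
    (h2mono : StrictMonoOn f' (Ico 0 R))
    (h3 : ∃ t ∈ Ioo (0:ℝ) R, f t = 0)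
    (h4 : ∃ t ∈ Ioo (0:ℝ) R, f t < 0)
    (tbar : ℝ) (htbar : tbar = sSup {t ∈ Ico (0:ℝ) R | f' t < 0})
    (β : ℝ) (hβ : β = sSup ((fun t => -f t) '' Ico (0:ℝ) R))
    (ρ : ℝ) (hρ0 : 0 ≤ ρ) (hρ : ρ < β / 2) :
    ρ < tbar / 2 ∧ f' ρ < 0 :=
  stmt3_general R hR f f' hderiv h1 h1' h2mono tbar htbar β hβ ρ hρ0 hρ
end

section
/- Let f be a majorant function on [0,R) with smallest root t*, and define κ := sup_{0<t<R} (-f(t))/t, λ := sup{ t ∈ [0,R) : κ + f'(t) < 0 }, and t̄ := sup{ t ∈ [0,R) : f'(t) < 0 }. Then 0 < κ < 1 and t* < λ ≤ t̄. -/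
open Set Filter Topology

/-!
Since `f'` is increasing, `f` is convex and lies above its tangents: the one at `0` gives
`f t ≥ f 0 - t`, hence `κ ≤ 1 - f 0 / R < 1`; the one at `t*` gives `f t ≥ f' t* (t - t*)`
beyond `t*`, while `f ≥ 0` on `(0, t*]` by the intermediate value theorem. Together these
bound every quotient `-f t / t` by `-f' t* (1 - t* / R) < -f' t*`, so `κ + f' t* < 0`, and
by continuity of `f'` the same holds slightly to the right of `t*`, which gives `t* < λ`.
-/

theorem MonotoneOn.convexOn_of_hasDerivWithinAt {D : Set ℝ} (hD : Convex ℝ D) {f f' : ℝ → ℝ}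
    (hf : ∀ x ∈ D, HasDerivWithinAt f (f' x) D x) (hf' : MonotoneOn f' D) :
    ConvexOn ℝ D f := by
  have hint : ∀ x ∈ interior D, HasDerivAt f (f' x) x := fun x hx =>
    (hf x (interior_subset hx)).hasDerivAt (mem_interior_iff_mem_nhds.1 hx)
  refine MonotoneOn.convexOn_of_deriv hD (fun x hx => (hf x hx).continuousWithinAt)
    (fun x hx => (hint x hx).differentiableAt.differentiableWithinAt) ?_
  intro x hx y hy hxy
  rw [(hint x hx).deriv, (hint y hy).deriv]
  exact hf' (interior_subset hx) (interior_subset hy) hxy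

theorem ConvexOn.add_mul_sub_le_of_hasDerivWithinAt {S : Set ℝ} {f : ℝ → ℝ} {f' x y : ℝ}
    (hfc : ConvexOn ℝ S f) (hx : x ∈ S) (hy : y ∈ S) (hxy : x ≤ y)
    (hf' : HasDerivWithinAt f f' S x) : f x + f' * (y - x) ≤ f y := by
  rcases hxy.eq_or_lt with rfl | hlt
  · simp
  have h := hfc.le_slope_of_hasDerivWithinAt hx hy hlt hf'
  rw [slope_def_field, le_div_iff₀ (sub_pos.2 hlt)] at h
  linarith

theorem ContinuousOn.nonneg_of_pos_of_forall_ne_zero {f : ℝ → ℝ} {a b : ℝ} (hab : a ≤ b)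
    (hf : ContinuousOn f (Icc a b)) (ha : 0 < f a) (hzero : ∀ x ∈ Ioo a b, f x ≠ 0) :
    0 ≤ f b := by
  by_contra! hb
  obtain ⟨x, hx, hfx⟩ := intermediate_value_Ioo' hab hf ⟨hb, ha⟩
  exact hzero x hx hfx

theorem nonneg_of_le_first_zero {f : ℝ → ℝ} {a b s : ℝ} (hf : ContinuousOn f (Ico a b))
    (ha : 0 < f a) (hsb : s < b) (hmin : ∀ t ∈ Ioo a b, f t = 0 → s ≤ t) :
    ∀ t ∈ Ioc a s, 0 ≤ f t := by
  rintro t ⟨hat, hts⟩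
  have htb : t < b := hts.trans_lt hsb
  refine (hf.mono (Icc_subset_Ico_right htb)).nonneg_of_pos_of_forall_ne_zero hat.le ha ?_
  rintro x ⟨hax, hxt⟩ hfx
  exact (hmin x ⟨hax, hxt.trans htb⟩ hfx).not_gt (hxt.trans_le hts)

theorem ContinuousWithinAt.exists_mem_Ioo_lt {g : ℝ → ℝ} {s : Set ℝ} {a b c : ℝ}
    (hg : ContinuousWithinAt g s a) (hs : s ∈ 𝓝[>] a) (hab : a < b) (hga : g a < c) :
    ∃ t ∈ Ioo a b, g t < c :=
  (Filter.Eventually.and (Ioo_mem_nhdsGT hab)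
    ((hg.mono_of_mem_nhdsWithin hs).eventually (gt_mem_nhds hga))).exists

theorem sSup_neg_div_bounds {f : ℝ → ℝ} {R s m κ : ℝ}
    (hκ : κ = sSup ((fun t => -f t / t) '' Ioo 0 R)) (hf0 : 0 < f 0) (hs : s ∈ Ioo 0 R)
    (hm : m < 0) (hlow : ∀ t ∈ Ioo 0 R, f 0 - t ≤ f t) (hnonneg : ∀ t ∈ Ioc 0 s, 0 ≤ f t)
    (htangent : ∀ t ∈ Ico s R, m * (t - s) ≤ f t) (hneg : ∃ t ∈ Ioo 0 R, f t < 0) :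
    0 < κ ∧ κ < 1 ∧ κ < -m := by
  subst hκ
  obtain ⟨hs0, hsR⟩ := hs
  have hR : 0 < R := hs0.trans hsR
  obtain ⟨t₀, ht₀, hft₀⟩ := hneg
  have hbound₁ : ∀ y ∈ (fun t => -f t / t) '' Ioo 0 R, y ≤ 1 - f 0 / R := by
    rintro _ ⟨t, ⟨ht0, htR⟩, rfl⟩
    have hf0R : f 0 / R * t ≤ f 0 := by
      rw [div_mul_eq_mul_div, div_le_iff₀ hR]
      nlinarith
    rw [div_le_iff₀ ht0]
    linarith [hlow t ⟨ht0, htR⟩]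
  have hbound₂ : ∀ y ∈ (fun t => -f t / t) '' Ioo 0 R, y ≤ -m * (1 - s / R) := by
    rintro _ ⟨t, ⟨ht0, htR⟩, rfl⟩
    have hsR' : 0 < 1 - s / R := sub_pos.2 ((div_lt_one hR).2 hsR)
    rcases le_or_gt t s with hts | hst
    · exact (div_nonpos_of_nonpos_of_nonneg (neg_nonpos.2 (hnonneg t ⟨ht0, hts⟩)) ht0.le).trans
        (mul_nonneg (neg_nonneg.2 hm.le) hsR'.le)
    · have hsRt : s / R * t ≤ s := by
        rw [div_mul_eq_mul_div, div_le_iff₀ hR]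
        nlinarith
      rw [div_le_iff₀ ht0]
      nlinarith [htangent t ⟨hst.le, htR⟩]
  have hne : ((fun t => -f t / t) '' Ioo 0 R).Nonempty := ⟨_, t₀, ht₀, rfl⟩
  refine ⟨(div_pos (neg_pos.2 hft₀) ht₀.1).trans_le (le_csSup ⟨_, hbound₁⟩ ⟨t₀, ht₀, rfl⟩),
    (csSup_le hne hbound₁).trans_lt ?_, (csSup_le hne hbound₂).trans_lt ?_⟩
  · linarith [div_pos hf0 hR]
  · nlinarith [div_pos hs0 hR]

theorem stmt4_general (R : ℝ) (f f' : ℝ → ℝ)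
    (hderiv : ∀ t ∈ Ico (0:ℝ) R, HasDerivWithinAt f (f' t) (Ico 0 R) t)
    (hcont : ContinuousOn f' (Ico 0 R))
    (h1 : 0 < f 0) (h1' : f' 0 = -1)
    (h2mono : StrictMonoOn f' (Ico 0 R))
    (tstar : ℝ) (htstar : tstar ∈ Ioo (0:ℝ) R) (hroot : f tstar = 0)
    (hmin : ∀ t ∈ Ioo (0:ℝ) R, f t = 0 → tstar ≤ t)
    (h4 : ∃ t ∈ Ioo (0:ℝ) R, f t < 0)
    (κ lam tbar : ℝ)
    (hκ : κ = sSup ((fun t => -f t / t) '' Ioo (0:ℝ) R))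
    (hlam : lam = sSup {t ∈ Ico (0:ℝ) R | κ + f' t < 0})
    (htbar : tbar = sSup {t ∈ Ico (0:ℝ) R | f' t < 0}) :
    0 < κ ∧ κ < 1 ∧ tstar < lam ∧ lam ≤ tbar := by
  obtain ⟨t₀, ht₀, hft₀⟩ := h4
  have hts : tstar ∈ Ico 0 R := Ioo_subset_Ico_self htstar
  have htangent : ∀ s ∈ Ico 0 R, ∀ t ∈ Ico 0 R, s ≤ t → f s + f' s * (t - s) ≤ f t :=
    fun s hs t ht hst => (h2mono.monotoneOn.convexOn_of_hasDerivWithinAt (convex_Ico 0 R)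
      hderiv).add_mul_sub_le_of_hasDerivWithinAt hs ht hst (hderiv s hs)
  have hnonneg := nonneg_of_le_first_zero (fun x hx => (hderiv x hx).continuousWithinAt) h1
    htstar.2 hmin
  have htst₀ : tstar < t₀ := lt_of_not_ge fun h => (hnonneg t₀ ⟨ht₀.1, h⟩).not_gt hft₀
  have hslope : f' tstar < 0 := by
    nlinarith [htangent tstar hts t₀ (Ioo_subset_Ico_self ht₀) htst₀.le]
  have hlow : ∀ t ∈ Ioo 0 R, f 0 - t ≤ f t := fun t ht => by
    simpa [h1'] using
      htangent 0 (left_mem_Ico.2 (ht.1.trans ht.2)) t (Ioo_subset_Ico_self ht) ht.1.le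
  have hbeyond : ∀ t ∈ Ico tstar R, f' tstar * (t - tstar) ≤ f t := fun t ht => by
    simpa [hroot] using htangent tstar hts t ⟨hts.1.trans ht.1, ht.2⟩ ht.1
  obtain ⟨hκpos, hκ1, hκslope⟩ :=
    sSup_neg_div_bounds hκ h1 htstar hslope hlow hnonneg hbeyond ⟨t₀, ht₀, hft₀⟩
  obtain ⟨t, ht, hft⟩ := (hcont tstar hts).exists_mem_Ioo_lt
    (mem_nhdsWithin_of_mem_nhds (Ico_mem_nhds htstar.1 htstar.2)) htstar.2
    (show f' tstar < -κ by linarith)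
  have htlam : t ∈ {t ∈ Ico (0:ℝ) R | κ + f' t < 0} :=
    ⟨⟨hts.1.trans ht.1.le, ht.2⟩, by linarith⟩
  refine ⟨hκpos, hκ1, ht.1.trans_le (hlam ▸ le_csSup ⟨R, fun x hx => hx.1.2.le⟩ htlam), ?_⟩
  rw [hlam, htbar]
  exact csSup_le_csSup ⟨R, fun x hx => hx.1.2.le⟩ ⟨t, htlam⟩
    fun x hx => ⟨hx.1, by linarith [hx.2]⟩

/-- with `κ = sup_{0<t<R} (-f t)/t`, `λ = sup{t : κ + f' t < 0}` and
`t̄ = sup{t : f' t < 0}`, one has `0 < κ < 1` and `t* < λ ≤ t̄`. -/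
theorem stmt4 (R : ℝ) (hR : 0 < R) (f f' : ℝ → ℝ)
    (hderiv : ∀ t ∈ Ico (0:ℝ) R, HasDerivWithinAt f (f' t) (Ico 0 R) t)
    (hcont : ContinuousOn f' (Ico 0 R))
    (h1 : 0 < f 0) (h1' : f' 0 = -1)
    (h2conv : ConvexOn ℝ (Ico 0 R) f')
    (h2mono : StrictMonoOn f' (Ico 0 R))
    (tstar : ℝ) (htstar : tstar ∈ Ioo (0:ℝ) R) (hroot : f tstar = 0)
    (hmin : ∀ t ∈ Ioo (0:ℝ) R, f t = 0 → tstar ≤ t)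
    (h4 : ∃ t ∈ Ioo (0:ℝ) R, f t < 0)
    (κ lam tbar : ℝ)
    (hκ : κ = sSup ((fun t => -f t / t) '' Ioo (0:ℝ) R))
    (hlam : lam = sSup {t ∈ Ico (0:ℝ) R | κ + f' t < 0})
    (htbar : tbar = sSup {t ∈ Ico (0:ℝ) R | f' t < 0}) :
    0 < κ ∧ κ < 1 ∧ tstar < lam ∧ lam ≤ tbar :=
  stmt4_general R f f' hderiv hcont h1 h1' h2mono tstar htstar hroot hmin h4 κ lam tbar hκ hlam
    htbar
end

section
/- Let f be a majorant function on [0,R) with κ := sup_{0<t<R} (-f(t))/t ∈ (0,1) and λ := sup{t∈[0,R): κ+f'(t)<0}. Then f'(t) + κ < 0 for all t ∈ [0,λ), and inf_{0≤t<R} ( f(t) + κ t ) = lim_{t→λ⁻} ( f(t) + κ t ) = 0. -/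
open Set Filter Topology

/-!
With `g t = f t + κ t`, the definition of `κ` as a supremum says exactly that `g ≥ 0` on
`[0, R)` (using `f 0 > 0` at `t = 0`) and that `g` comes arbitrarily close to `0`, so
`inf g = 0`.
Since `g' = f' + κ` and `f'` is increasing, `g` decreases on `[0, λ)` and increases on `[λ, R)`;
hence `g` attains its infimum in the limit `t → λ⁻`. Continuity of `f'` at `0`, together with
`f' 0 + κ = κ - 1 < 0`, keeps `λ` away from `0`.
-/

theorem isGLB_add_mul_of_isLUB_neg_div {f : ℝ → ℝ} {R κ : ℝ} (hR : 0 < R) (h0 : 0 ≤ f 0)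
    (hκ : IsLUB ((fun t => -f t / t) '' Ioo 0 R) κ) :
    IsGLB ((fun t => f t + κ * t) '' Ico 0 R) 0 := by
  refine ⟨forall_mem_image.2 fun t ht => ?_,
    fun m hm => le_of_forall_pos_lt_add fun ε hε => ?_⟩
  · rcases ht.1.eq_or_lt with rfl | htpos
    · simpa using h0
    · have := hκ.1 (mem_image_of_mem _ ⟨htpos, ht.2⟩)
      rw [div_le_iff₀ htpos] at this
      linarith
  · obtain ⟨_, ⟨t, ht, rfl⟩, hlt, -⟩ :=
      hκ.exists_between (show κ - ε / R < κ by linarith [div_pos hε hR])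
    rw [lt_div_iff₀ ht.1] at hlt
    have hεt : ε / R * t < ε := by
      calc ε / R * t < ε / R * R := mul_lt_mul_of_pos_left ht.2 (div_pos hε hR)
        _ = ε := div_mul_cancel₀ ε hR.ne'
    have := hm (mem_image_of_mem _ (Ioo_subset_Ico_self ht))
    linarith

theorem MonotoneOn.lt_of_lt_csSup_sep {φ : ℝ → ℝ} {D : Set ℝ} {c t : ℝ}
    (hφ : MonotoneOn φ D) (hne : {s ∈ D | φ s < c}.Nonempty) (ht : t ∈ D)
    (hlt : t < sSup {s ∈ D | φ s < c}) :
    φ t < c := by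
  obtain ⟨s, hs, hts⟩ := exists_lt_of_lt_csSup hne hlt
  exact (hφ ht hs.1 hts.le).trans_lt hs.2

theorem bddAbove_of_sSup_pos {s : Set ℝ} (h : 0 < sSup s) : BddAbove s := by
  by_contra hs
  rw [Real.sSup_of_not_bddAbove hs] at h
  exact h.false

theorem pos_csSup_sep_of_continuousWithinAt {φ : ℝ → ℝ} {R : ℝ} (hR : 0 < R)
    (hφ : ContinuousWithinAt φ (Ico 0 R) 0) (h0 : φ 0 < 0) :
    0 < sSup {t ∈ Ico 0 R | φ t < 0} := by
  rw [ContinuousWithinAt, nhdsWithin_Ico_eq_nhdsGE hR] at hφ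
  have hlt : ∀ᶠ s in 𝓝[>] 0, φ s < 0 :=
    (hφ.mono_left (nhdsWithin_mono _ Ioi_subset_Ici_self)).eventually (gt_mem_nhds h0)
  have hmem : ∀ᶠ s in 𝓝[>] (0:ℝ), s ∈ Ioo 0 R := Ioo_mem_nhdsGT hR
  obtain ⟨s, hs, hφs⟩ := (hmem.and hlt).exists
  exact hs.1.trans_le (le_csSup ⟨R, fun t ht => ht.1.2.le⟩ ⟨Ioo_subset_Ico_self hs, hφs⟩)

theorem antitoneOn_of_hasDerivWithinAt_of_subset_s5 {g g' : ℝ → ℝ} {s D : Set ℝ}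
    (hg : ∀ x ∈ s, HasDerivWithinAt g (g' x) s x) (hDs : D ⊆ s) (hD : Convex ℝ D)
    (hg' : ∀ x ∈ interior D, g' x ≤ 0) : AntitoneOn g D :=
  antitoneOn_of_hasDerivWithinAt_nonpos hD
    (fun x hx => (hg x (hDs hx)).continuousWithinAt.mono hDs)
    (fun x hx => (hg x (hDs (interior_subset hx))).mono (interior_subset.trans hDs)) hg'

theorem monotoneOn_of_hasDerivWithinAt_of_subset_s5 {g g' : ℝ → ℝ} {s D : Set ℝ}
    (hg : ∀ x ∈ s, HasDerivWithinAt g (g' x) s x) (hDs : D ⊆ s) (hD : Convex ℝ D)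
    (hg' : ∀ x ∈ interior D, 0 ≤ g' x) : MonotoneOn g D :=
  monotoneOn_of_hasDerivWithinAt_nonneg hD
    (fun x hx => (hg x (hDs hx)).continuousWithinAt.mono hDs)
    (fun x hx => (hg x (hDs (interior_subset hx))).mono (interior_subset.trans hDs)) hg'

theorem tendsto_nhdsLT_of_antitoneOn_of_monotoneOn {g : ℝ → ℝ} {a b c m : ℝ} (hab : a < b)
    (hbc : b ≤ c) (hcont : ContinuousOn g (Ico a c)) (hanti : AntitoneOn g (Ico a b))
    (hmono : MonotoneOn g (Ico b c)) (hm : IsGLB (g '' Ico a c) m) :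
    Tendsto g (𝓝[<] b) (𝓝 m) := by
  have hsub : Ioo a b ⊆ Ico a c := Ioo_subset_Ico_self.trans (Ico_subset_Ico_right hbc)
  have hmle : ∀ t ∈ Ioo a b, m ≤ g t := fun t ht => hm.1 (mem_image_of_mem _ (hsub ht))
  have hl := (hanti.mono Ioo_subset_Ico_self).tendsto_nhdsWithin_Ioo_left (nonempty_Ioo.2 hab)
    ⟨m, forall_mem_image.2 hmle⟩
  have hle : ∀ t ∈ Ico a c, sInf (g '' Ioo a b) ≤ g t := by
    intro t ht
    rcases lt_or_ge t b with htb | hbt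
    · refine le_of_tendsto hl (mem_of_superset (Ioo_mem_nhdsLT htb) fun s hs => ?_)
      exact hanti ⟨ht.1, htb⟩ ⟨ht.1.trans hs.1.le, hs.2⟩ hs.1.le
    · have hbc' : b < c := hbt.trans_lt ht.2
      have hgb : g b = sInf (g '' Ioo a b) := tendsto_nhds_unique
        ((hcont.continuousAt (Ico_mem_nhds hab hbc')).tendsto.mono_left nhdsWithin_le_nhds) hl
      exact hgb ▸ hmono ⟨le_rfl, hbc'⟩ ⟨hbt, ht.2⟩ hbt
  have hlm : sInf (g '' Ioo a b) = m := le_antisymm (hm.2 (forall_mem_image.2 hle))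
    (ge_of_tendsto hl (mem_of_superset (Ioo_mem_nhdsLT hab) hmle))
  exact hlm ▸ hl

theorem tendsto_nhdsLT_of_hasDerivWithinAt_nonpos_nonneg {g g' : ℝ → ℝ} {a b c m : ℝ}
    (hab : a < b) (hbc : b ≤ c) (hg : ∀ x ∈ Ico a c, HasDerivWithinAt g (g' x) (Ico a c) x)
    (hneg : ∀ x ∈ Ioo a b, g' x ≤ 0) (hpos : ∀ x ∈ Ioo b c, 0 ≤ g' x)
    (hm : IsGLB (g '' Ico a c) m) : Tendsto g (𝓝[<] b) (𝓝 m) := by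
  refine tendsto_nhdsLT_of_antitoneOn_of_monotoneOn hab hbc
    (fun x hx => (hg x hx).continuousWithinAt) ?_ ?_ hm
  · refine antitoneOn_of_hasDerivWithinAt_of_subset_s5 hg (Ico_subset_Ico_right hbc)
      (convex_Ico _ _) ?_
    rwa [interior_Ico]
  · refine monotoneOn_of_hasDerivWithinAt_of_subset_s5 hg (Ico_subset_Ico_left hab.le)
      (convex_Ico _ _) ?_
    rwa [interior_Ico]

theorem stmt5_general (R : ℝ) (hR : 0 < R) (f f' : ℝ → ℝ)
    (hderiv : ∀ t ∈ Ico (0:ℝ) R, HasDerivWithinAt f (f' t) (Ico 0 R) t)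
    (hcont : ContinuousOn f' (Ico 0 R))
    (h1 : 0 < f 0) (h1' : f' 0 = -1)
    (h2mono : StrictMonoOn f' (Ico 0 R))
    (κ lam : ℝ)
    (hκ : κ = sSup ((fun t => -f t / t) '' Ioo (0:ℝ) R))
    (hκ01 : 0 < κ ∧ κ < 1)
    (hlam : lam = sSup {t ∈ Ico (0:ℝ) R | κ + f' t < 0}) :
    (∀ t ∈ Ico (0:ℝ) lam, f' t + κ < 0) ∧
      sInf ((fun t => f t + κ * t) '' Ico (0:ℝ) R) = 0 ∧
      Tendsto (fun t => f t + κ * t) (𝓝[<] lam) (𝓝 0) := by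
  obtain ⟨hκ0, hκ1⟩ := hκ01
  set S := {t ∈ Ico (0:ℝ) R | κ + f' t < 0}
  have hSbdd : BddAbove S := ⟨R, fun t ht => ht.1.2.le⟩
  have h0S : (0:ℝ) ∈ S := ⟨left_mem_Ico.2 hR, by linarith⟩
  have hlamR : lam ≤ R := hlam ▸ csSup_le ⟨0, h0S⟩ fun t ht => ht.1.2.le
  have hlam0 : 0 < lam :=
    hlam ▸ pos_csSup_sep_of_continuousWithinAt hR
      (continuousWithinAt_const.add (hcont 0 h0S.1)) h0S.2
  have hneg : ∀ t ∈ Ico 0 lam, f' t + κ < 0 := fun t ht => by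
    have := (h2mono.monotoneOn.const_add κ).lt_of_lt_csSup_sep ⟨0, h0S⟩
      ⟨ht.1, ht.2.trans_le hlamR⟩ (hlam ▸ ht.2)
    linarith
  have hnonneg : ∀ t ∈ Ioo lam R, 0 ≤ f' t + κ := fun t ht => by
    by_contra! h
    have hmem : t ∈ S := ⟨⟨hlam0.le.trans ht.1.le, ht.2⟩, by linarith⟩
    exact (hlam ▸ le_csSup hSbdd hmem).not_gt ht.1
  have hg (t) (ht : t ∈ Ico 0 R) :
      HasDerivWithinAt (fun t => f t + κ * t) (f' t + κ) (Ico 0 R) t :=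
    (hderiv t ht).add (((hasDerivWithinAt_id t _).const_mul κ).congr_deriv (mul_one κ))
  have hglb := isGLB_add_mul_of_isLUB_neg_div hR h1.le
    (hκ ▸ isLUB_csSup ((nonempty_Ioo.2 hR).image _) (bddAbove_of_sSup_pos (hκ ▸ hκ0)))
  exact ⟨hneg, hglb.csInf_eq ((nonempty_Ico.2 hR).image _),
    tendsto_nhdsLT_of_hasDerivWithinAt_nonpos_nonneg hlam0 hlamR hg
      (fun t ht => (hneg t (Ioo_subset_Ico_self ht)).le) hnonneg hglb⟩

/-- `f' t + κ < 0` on `[0,λ)` and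
`inf_{0≤t<R} (f t + κ t) = lim_{t→λ⁻} (f t + κ t) = 0`. -/
theorem stmt5 (R : ℝ) (hR : 0 < R) (f f' : ℝ → ℝ)
    (hderiv : ∀ t ∈ Ico (0:ℝ) R, HasDerivWithinAt f (f' t) (Ico 0 R) t)
    (hcont : ContinuousOn f' (Ico 0 R))
    (h1 : 0 < f 0) (h1' : f' 0 = -1)
    (h2conv : ConvexOn ℝ (Ico 0 R) f')
    (h2mono : StrictMonoOn f' (Ico 0 R))
    (h3 : ∃ t ∈ Ioo (0:ℝ) R, f t = 0)
    (h4 : ∃ t ∈ Ioo (0:ℝ) R, f t < 0)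
    (κ lam : ℝ)
    (hκ : κ = sSup ((fun t => -f t / t) '' Ioo (0:ℝ) R))
    (hκ01 : 0 < κ ∧ κ < 1)
    (hlam : lam = sSup {t ∈ Ico (0:ℝ) R | κ + f' t < 0}) :
    (∀ t ∈ Ico (0:ℝ) lam, f' t + κ < 0) ∧
      sInf ((fun t => f t + κ * t) '' Ico (0:ℝ) R) = 0 ∧
      Tendsto (fun t => f t + κ * t) (𝓝[<] lam) (𝓝 0) :=
  stmt5_general R hR f f' hderiv hcont h1 h1' h2mono κ lam hκ hκ01 hlam
end

section
/- Let f be a majorant function on [0,R) with κ := sup_{0<t<R}(-f(t))/t, λ := sup{t∈[0,λ): κ+f'(t)<0}, and θ̃ := κ/(2-κ). Fix 0 ≤ θ ≤ θ̃ and define the set A := { (t,ε) ∈ ℝ² : 0 ≤ t < λ, 0 ≤ ε ≤ κt, 0 < f(t)+ε }. If (t,ε) ∈ A and t₊ := t - (1+θ)(f(t)+ε)/f'(t), ε₊ := ε + 2θ(f(t)+ε), then (t₊, ε₊) ∈ A, t < t₊, and ε ≤ ε₊. -/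
/-!
Along the majorant, `h s = f s + κ s` is convex, decreasing on `[0, λ]` and nondecreasing on
`[λ, R)`, while the definition of `κ` as `sup (-f s / s)` forces `inf h ≤ 0` on `(0, R)`. Hence
the tangent line of `f` at `t < λ` satisfies `f t + f' t (λ - t) + κ λ ≤ 0`. Together with
`ε ≤ κ t` this bounds the Newton step `(1 + θ)(f t + ε) / |f' t|` by `λ - t`, because
`θ |f' t| ≤ θ < κ (1 + θ)` follows from `θ ≤ κ / (2 - κ)` and `|f' t| ≤ 1`. Strict convexity of
`f` gives `f t₊ > f t - (1 + θ)(f t + ε)`, hence `f t₊ + ε₊ > θ (f t + ε) ≥ 0`.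
-/

open Set

section Tangent

variable {D : Set ℝ} {f f' : ℝ → ℝ}

theorem strictConvexOn_of_hasDerivWithinAt_of_strictMonoOn (hD : Convex ℝ D)
    (hf : ∀ x ∈ D, HasDerivWithinAt f (f' x) D x) (hf' : StrictMonoOn f' D) :
    StrictConvexOn ℝ D f := by
  refine StrictMonoOn.strictConvexOn_of_deriv hD
    (fun x hx => (hf x hx).continuousWithinAt) ?_
  refine (hf'.mono interior_subset).congr fun x hx => ?_
  exact ((hf x (interior_subset hx)).hasDerivAt (mem_interior_iff_mem_nhds.mp hx)).deriv.symm

theorem add_mul_sub_lt_of_strictMonoOn (hD : Convex ℝ D)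
    (hf : ∀ x ∈ D, HasDerivWithinAt f (f' x) D x) (hf' : StrictMonoOn f' D)
    {x y : ℝ} (hx : x ∈ D) (hy : y ∈ D) (hxy : x ≠ y) :
    f x + f' x * (y - x) < f y := by
  have hfc := strictConvexOn_of_hasDerivWithinAt_of_strictMonoOn hD hf hf'
  rcases hxy.lt_or_gt with hxy | hyx
  · have := hfc.lt_slope_of_hasDerivWithinAt hx hy hxy (hf x hx)
    rw [slope_def_field, lt_div_iff₀ (sub_pos.mpr hxy)] at this
    linarith
  · have := hfc.slope_lt_of_hasDerivWithinAt hy hx hyx (hf x hx)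
    rw [slope_def_field, div_lt_iff₀ (sub_pos.mpr hyx)] at this
    linarith

theorem add_mul_sub_le_of_strictMonoOn (hD : Convex ℝ D)
    (hf : ∀ x ∈ D, HasDerivWithinAt f (f' x) D x) (hf' : StrictMonoOn f' D)
    {x y : ℝ} (hx : x ∈ D) (hy : y ∈ D) :
    f x + f' x * (y - x) ≤ f y := by
  rcases eq_or_ne x y with rfl | hxy
  · simp
  · exact (add_mul_sub_lt_of_strictMonoOn hD hf hf' hx hy hxy).le

end Tangent

section Majorant

variable {R κ lam : ℝ} {f f' : ℝ → ℝ}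

theorem isLUB_neg_div_of_majorant
    (hf : ∀ t ∈ Ico 0 R, HasDerivWithinAt f (f' t) (Ico 0 R) t)
    (hf' : StrictMonoOn f' (Ico 0 R)) (h0 : 0 < f 0) (h0' : f' 0 = -1)
    (hneg : ∃ t ∈ Ioo 0 R, f t < 0) :
    IsLUB ((fun t => -f t / t) '' Ioo 0 R) (sSup ((fun t => -f t / t) '' Ioo 0 R)) ∧
      0 < sSup ((fun t => -f t / t) '' Ioo 0 R) ∧ sSup ((fun t => -f t / t) '' Ioo 0 R) < 1 := by
  obtain ⟨t₀, ht₀, hft₀⟩ := hneg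
  have hR : 0 < R := ht₀.1.trans ht₀.2
  have hbound : ∀ x ∈ (fun t => -f t / t) '' Ioo 0 R, x ≤ 1 - f 0 / R := by
    rintro _ ⟨s, hs, rfl⟩
    have htangent := add_mul_sub_le_of_strictMonoOn (convex_Ico 0 R) hf hf' ⟨le_rfl, hR⟩
      ⟨hs.1.le, hs.2⟩
    have hfR : f 0 / R * s ≤ f 0 := by
      rw [div_mul_eq_mul_div, div_le_iff₀ hR]
      nlinarith [hs.2]
    rw [h0'] at htangent
    rw [div_le_iff₀ hs.1]
    linarith
  have hlub := isLUB_csSup ⟨_, mem_image_of_mem _ ht₀⟩ ⟨_, hbound⟩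
  refine ⟨hlub, ?_, ?_⟩
  · exact (div_pos (neg_pos.mpr hft₀) ht₀.1).trans_le (hlub.1 (mem_image_of_mem _ ht₀))
  · exact (hlub.2 hbound).trans_lt (sub_lt_self 1 (div_pos h0 hR))

theorem nonpos_of_forall_le_add_mul (hκ : IsLUB ((fun t => -f t / t) '' Ioo 0 R) κ)
    (hR : 0 < R) {L : ℝ} (hL : ∀ s ∈ Ioo 0 R, L ≤ f s + κ * s) : L ≤ 0 := by
  by_contra! hL0
  obtain ⟨_, ⟨s, hs, rfl⟩, hlt, -⟩ := hκ.exists_between (sub_lt_self κ (div_pos hL0 hR))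
  rw [lt_div_iff₀ hs.1] at hlt
  have hsR : L / R * s < L := by
    rw [div_mul_eq_mul_div, div_lt_iff₀ hR]
    nlinarith [hs.2]
  linarith [hL s hs]

theorem lt_neg_of_lt_isLUB (hf' : StrictMonoOn f' (Ico 0 R))
    (hlam : IsLUB {t ∈ Ico 0 R | κ + f' t < 0} lam) {c : ℝ} (hc0 : 0 ≤ c) (hc : c < lam) :
    f' c < -κ := by
  obtain ⟨s, ⟨hs, hsκ⟩, hcs, -⟩ := hlam.exists_between hc
  linarith [hf' ⟨hc0, hcs.trans hs.2⟩ hs hcs]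

theorem neg_le_of_isLUB_lt (hlam : IsLUB {t ∈ Ico 0 R | κ + f' t < 0} lam) {c : ℝ}
    (hc : c ∈ Ico 0 R) (hlc : lam < c) : -κ ≤ f' c := by
  by_contra! h
  exact (hlam.1 ⟨hc, by linarith⟩).not_gt hlc

theorem monotoneOn_add_mul_of_isLUB
    (hf : ∀ t ∈ Ico 0 R, HasDerivWithinAt f (f' t) (Ico 0 R) t)
    (hlam : IsLUB {t ∈ Ico 0 R | κ + f' t < 0} lam) (hlam0 : 0 ≤ lam) :
    MonotoneOn (fun s => f s + κ * s) (Ico lam R) := by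
  have hsub : Ico lam R ⊆ Ico 0 R := Ico_subset_Ico_left hlam0
  refine monotoneOn_of_hasDerivWithinAt_nonneg (f' := fun s => f' s + κ) (convex_Ico lam R)
    (fun s hs => ((hf s (hsub hs)).continuousWithinAt.mono hsub).add
      (continuousWithinAt_id.const_mul κ)) (fun s hs => ?_) (fun s hs => ?_) <;>
    rw [interior_Ico] at hs
  · rw [interior_Ico]
    simpa using ((hf s (hsub (Ioo_subset_Ico_self hs))).mono
      (Ioo_subset_Ico_self.trans hsub)).fun_add ((hasDerivWithinAt_id s _).const_mul κ)
  · linarith [neg_le_of_isLUB_lt hlam (hsub (Ioo_subset_Ico_self hs)) hs.1]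

theorem add_mul_sub_add_mul_le_of_isLUB
    (hf : ∀ t ∈ Ico 0 R, HasDerivWithinAt f (f' t) (Ico 0 R) t)
    (hf' : StrictMonoOn f' (Ico 0 R)) (hlam : IsLUB {t ∈ Ico 0 R | κ + f' t < 0} lam)
    {t s : ℝ} (ht0 : 0 ≤ t) (ht : t < lam) (hs : s ∈ Ico 0 R) :
    f t + f' t * (lam - t) + κ * lam ≤ f s + κ * s := by
  have htR : t ∈ Ico 0 R := ⟨ht0, ht.trans_le (hlam.2 fun x hx => hx.1.2.le)⟩
  have hslope : f' t + κ < 0 := by linarith [lt_neg_of_lt_isLUB hf' hlam ht0 ht]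
  rcases le_or_gt s lam with hsl | hls
  · have := add_mul_sub_le_of_strictMonoOn (convex_Ico 0 R) hf hf' htR hs
    nlinarith
  · have hlamR : lam ∈ Ico 0 R := ⟨ht0.trans ht.le, hls.trans hs.2⟩
    have htangent := add_mul_sub_le_of_strictMonoOn (convex_Ico 0 R) hf hf' htR hlamR
    have hmono := monotoneOn_add_mul_of_isLUB hf hlam hlamR.1 ⟨le_rfl, hlamR.2⟩ ⟨hls.le, hs.2⟩
      hls.le
    linarith

end Majorant

section NewtonStep

variable {κ θ D d : ℝ}

theorem mul_div_lt_of_tangent_nonpos {F t lam : ℝ} (hκ : 0 < κ) (hθ0 : 0 ≤ θ)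
    (hθ : 2 * θ ≤ κ * (1 + θ)) (hκD : κ < D) (hD1 : D ≤ 1) (hd : 0 < d)
    (hdF : d ≤ F + κ * t) (hkey : F - D * (lam - t) + κ * lam ≤ 0) :
    (1 + θ) * d / D < lam - t := by
  have hgap : 0 < lam - t := by nlinarith
  rw [div_lt_iff₀ (hκ.trans hκD)]
  nlinarith [mul_le_mul_of_nonneg_left hD1 hθ0]

theorem add_two_mul_le_mul_add_div {ε t : ℝ} (hκ : 0 ≤ κ) (hθ0 : 0 ≤ θ)
    (hθ : 2 * θ ≤ κ * (1 + θ)) (hD0 : 0 < D) (hD1 : D ≤ 1) (hd : 0 ≤ d) (hε : ε ≤ κ * t) :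
    ε + 2 * θ * d ≤ κ * (t + (1 + θ) * d / D) := by
  have hdD : d ≤ d / D := (le_div_iff₀ hD0).mpr (by nlinarith)
  rw [mul_div_assoc]
  nlinarith [mul_le_mul_of_nonneg_left hdD (mul_nonneg hκ (by linarith : (0:ℝ) ≤ 1 + θ)),
    mul_le_mul_of_nonneg_right hθ hd]

end NewtonStep

theorem stmt6_general (R : ℝ) (f f' : ℝ → ℝ)
    (hderiv : ∀ t ∈ Ico (0:ℝ) R, HasDerivWithinAt f (f' t) (Ico 0 R) t)
    (h1 : 0 < f 0) (h1' : f' 0 = -1)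
    (h2mono : StrictMonoOn f' (Ico 0 R))
    (h4 : ∃ t ∈ Ioo (0:ℝ) R, f t < 0)
    (κ lam θ : ℝ)
    (hκ : κ = sSup ((fun t => -f t / t) '' Ioo (0:ℝ) R))
    (hlam : lam = sSup {t ∈ Ico (0:ℝ) R | κ + f' t < 0})
    (hθ0 : 0 ≤ θ) (hθ : θ ≤ κ / (2 - κ))
    (A : Set (ℝ × ℝ))
    (hA : A = {p : ℝ × ℝ | 0 ≤ p.1 ∧ p.1 < lam ∧ 0 ≤ p.2 ∧ p.2 ≤ κ * p.1 ∧
      0 < f p.1 + p.2})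
    (t ε : ℝ) (ht : (t, ε) ∈ A) :
    (t - (1 + θ) * (f t + ε) / f' t, ε + 2 * θ * (f t + ε)) ∈ A ∧
      t < t - (1 + θ) * (f t + ε) / f' t ∧
      ε ≤ ε + 2 * θ * (f t + ε) := by
  obtain ⟨ht0, htlam, hε0, hεκ, hpos⟩ : 0 ≤ t ∧ t < lam ∧ 0 ≤ ε ∧ ε ≤ κ * t ∧ 0 < f t + ε :=
    by subst hA; exact ht
  have hR : 0 < R := by obtain ⟨s, hs, -⟩ := h4; exact hs.1.trans hs.2
  obtain ⟨hκLUB, hκ0, hκ1⟩ := hκ ▸ isLUB_neg_div_of_majorant hderiv h2mono h1 h1' h4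
  have hlamLUB : IsLUB {t ∈ Ico 0 R | κ + f' t < 0} lam :=
    hlam ▸ isLUB_csSup ⟨0, ⟨le_rfl, hR⟩, by linarith⟩ ⟨R, fun x hx => hx.1.2.le⟩
  have hlamR : lam ≤ R := hlamLUB.2 fun x hx => hx.1.2.le
  have htR : t ∈ Ico 0 R := ⟨ht0, htlam.trans_le hlamR⟩
  have hft : f' t < -κ := lt_neg_of_lt_isLUB h2mono hlamLUB ht0 htlam
  have hft1 : -1 ≤ f' t := h1' ▸ h2mono.monotoneOn ⟨le_rfl, hR⟩ htR ht0
  have hkey : f t + f' t * (lam - t) + κ * lam ≤ 0 := nonpos_of_forall_le_add_mul hκLUB hR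
    fun s hs => add_mul_sub_add_mul_le_of_isLUB hderiv h2mono hlamLUB ht0 htlam ⟨hs.1.le, hs.2⟩
  have hθ' : 2 * θ ≤ κ * (1 + θ) := by
    rw [le_div_iff₀ (by linarith)] at hθ
    linarith
  set s := (1 + θ) * (f t + ε) / -f' t with hs
  have hstep : t - (1 + θ) * (f t + ε) / f' t = t + s := by rw [hs, div_neg, sub_eq_add_neg]
  have hs_pos : 0 < s := div_pos (by positivity) (by linarith)
  have hs_lt : s < lam - t := mul_div_lt_of_tangent_nonpos hκ0 hθ0 hθ' (by linarith)
    (by linarith) hpos (by linarith) (by linarith : f t - -f' t * (lam - t) + κ * lam ≤ 0)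
  have htangent : f t - (1 + θ) * (f t + ε) < f (t + s) := by
    have hcancel : f' t * s = -((1 + θ) * (f t + ε)) := by
      rw [hs]
      field_simp [(by linarith : f' t < 0).ne]
    simpa [hcancel, sub_eq_add_neg] using add_mul_sub_lt_of_strictMonoOn (convex_Ico 0 R) hderiv
      h2mono htR ⟨by linarith, by linarith⟩ (by linarith : t ≠ t + s)
  subst hA
  rw [hstep]
  refine ⟨⟨by linarith, by linarith, by positivity, ?_, by nlinarith⟩, by linarith, by nlinarith⟩
  exact add_two_mul_le_mul_add_div hκ0.le hθ0 hθ' (by linarith) (by linarith) hpos.le hεκ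

/-- the inexact Newton iteration on the majorant function maps the set
`A` into itself, with `t < t₊` and `ε ≤ ε₊`. -/
theorem stmt6 (R : ℝ) (hR : 0 < R) (f f' : ℝ → ℝ)
    (hderiv : ∀ t ∈ Ico (0:ℝ) R, HasDerivWithinAt f (f' t) (Ico 0 R) t)
    (hcont : ContinuousOn f' (Ico 0 R))
    (h1 : 0 < f 0) (h1' : f' 0 = -1)
    (h2conv : ConvexOn ℝ (Ico 0 R) f')
    (h2mono : StrictMonoOn f' (Ico 0 R))
    (h3 : ∃ t ∈ Ioo (0:ℝ) R, f t = 0)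
    (h4 : ∃ t ∈ Ioo (0:ℝ) R, f t < 0)
    (κ lam θ : ℝ)
    (hκ : κ = sSup ((fun t => -f t / t) '' Ioo (0:ℝ) R))
    (hlam : lam = sSup {t ∈ Ico (0:ℝ) R | κ + f' t < 0})
    (hθ0 : 0 ≤ θ) (hθ : θ ≤ κ / (2 - κ))
    (A : Set (ℝ × ℝ))
    (hA : A = {p : ℝ × ℝ | 0 ≤ p.1 ∧ p.1 < lam ∧ 0 ≤ p.2 ∧ p.2 ≤ κ * p.1 ∧
      0 < f p.1 + p.2})
    (t ε : ℝ) (ht : (t, ε) ∈ A) :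
    (t - (1 + θ) * (f t + ε) / f' t, ε + 2 * θ * (f t + ε)) ∈ A ∧
      t < t - (1 + θ) * (f t + ε) / f' t ∧
      ε ≤ ε + 2 * θ * (f t + ε) :=
  stmt6_general R f f' hderiv h1 h1' h2mono h4 κ lam θ hκ hlam hθ0 hθ A hA t ε ht
end

section
/- Let f be a majorant function on [0,R) and define the linearization error e_f(v,t) := f(v) - [f(t) + f'(t)(v-t)]. If 0 ≤ b ≤ t, 0 ≤ a ≤ s, t+s < R and s ≠ 0, then e_f(a+b, b) ≤ max{ e_f(t+s, t), (1/2)·((f'(t+s)-f'(t))/s)·a² }. -/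
open Set

/-!
Put `c = (f'(t+s) - f'(t))/s`. Convexity of `f'` makes its secant slopes monotone in both
endpoints, so on `[b, a+b] ⊆ [b, t+s]` the derivative satisfies `f'(v) - f'(b) ≤ c (v - b)`.
Hence `v ↦ f v - f'(b) v - c/2 (v - b)²` is antitone on `[b, a+b]`, which gives
`e_f(a+b, b) ≤ c a²/2`, the second term of the maximum.
-/

theorem ConvexOn.slope_le_slope_of_le {𝕜 : Type*} [Field 𝕜] [LinearOrder 𝕜]
    [IsStrictOrderedRing 𝕜] {D : Set 𝕜} {g : 𝕜 → 𝕜} (hg : ConvexOn 𝕜 D g) {x y z w : 𝕜} (hx : x ∈ D) (hy : y ∈ D) (hz : z ∈ D) (hw : w ∈ D)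
    (hxy : x < y) (hzw : z < w) (hxz : x ≤ z) (hyw : y ≤ w) :
    slope g x y ≤ slope g z w :=
  calc slope g x y ≤ slope g x w :=
        hg.slope_mono hx ⟨hy, hxy.ne'⟩ ⟨hw, (hxy.trans_le hyw).ne'⟩ hyw
    _ = slope g w x := slope_comm g x w
    _ ≤ slope g w z := hg.slope_mono hw ⟨hx, (hxy.trans_le hyw).ne⟩ ⟨hz, hzw.ne⟩ hxz
    _ = slope g z w := slope_comm g w z

theorem sub_add_mul_le_of_deriv_sub_le {f f' : ℝ → ℝ} {x y c : ℝ} (hxy : x ≤ y)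
    (hf : ∀ v ∈ Icc x y, HasDerivWithinAt f (f' v) (Icc x y) v)
    (hf' : ∀ v ∈ Ioo x y, f' v - f' x ≤ c * (v - x)) :
    f y - (f x + f' x * (y - x)) ≤ c / 2 * (y - x) ^ 2 := by
  have hq : ∀ v, HasDerivAt (fun v => f' x * v + c / 2 * (v - x) ^ 2) (f' x + c * (v - x)) v := by
    intro v
    refine (((hasDerivAt_id' v).const_mul (f' x)).add
      ((((hasDerivAt_id' v).sub_const x).fun_pow 2).const_mul (c / 2))).congr_deriv ?_
    push_cast
    ring
  have hanti : AntitoneOn (fun v => f v - (f' x * v + c / 2 * (v - x) ^ 2)) (Icc x y) := by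
    refine antitoneOn_of_hasDerivWithinAt_nonpos (f' := fun v => f' v - (f' x + c * (v - x)))
      (convex_Icc x y)
      (fun v hv => (hf v hv).continuousWithinAt.sub (hq v).continuousAt.continuousWithinAt)
      (fun v hv => ?_) (fun v hv => ?_)
    · rw [interior_Icc] at hv ⊢
      exact ((hf v (Ioo_subset_Icc_self hv)).mono Ioo_subset_Icc_self).sub (hq v).hasDerivWithinAt
    · rw [interior_Icc] at hv
      linarith [hf' v hv]
  have := hanti (left_mem_Icc.mpr hxy) (right_mem_Icc.mpr hxy) hxy
  simp only [sub_self] at this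
  linarith

theorem stmt8_general (R : ℝ) (f f' : ℝ → ℝ)
    (hderiv : ∀ t ∈ Ico (0:ℝ) R, HasDerivWithinAt f (f' t) (Ico 0 R) t)
    (h2conv : ConvexOn ℝ (Ico 0 R) f')
    (e : ℝ → ℝ → ℝ) (he : ∀ v t, e v t = f v - (f t + f' t * (v - t)))
    (a b s t : ℝ) (hb : 0 ≤ b) (hbt : b ≤ t) (ha : 0 ≤ a) (has : a ≤ s)
    (hts : t + s < R) :
    e (a + b) b ≤ max (e (t + s) t) ((1 / 2) * ((f' (t + s) - f' t) / s) * a ^ 2) := by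
  have hsub : Icc b (a + b) ⊆ Ico 0 R := fun v hv => ⟨hb.trans hv.1, by linarith [hv.2]⟩
  have hslope : ∀ v ∈ Ioo b (a + b), f' v - f' b ≤ (f' (t + s) - f' t) / s * (v - b) := by
    intro v hv
    have h := h2conv.slope_le_slope_of_le (hsub (left_mem_Icc.mpr (by linarith)))
      (hsub (Ioo_subset_Icc_self hv)) ⟨hb.trans hbt, by linarith⟩ ⟨by linarith, hts⟩
      hv.1 (by linarith [hv.1, hv.2]) hbt (by linarith [hv.2])
    rw [slope_def_field, slope_def_field, add_sub_cancel_left, div_le_iff₀ (sub_pos.mpr hv.1)] at h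
    exact h
  have hbound := sub_add_mul_le_of_deriv_sub_le (by linarith : b ≤ a + b)
    (fun v hv => (hderiv v (hsub hv)).mono hsub) hslope
  rw [he]
  rw [add_sub_cancel_right] at hbound ⊢
  refine le_max_of_le_right (hbound.trans_eq ?_)
  ring

/-- monotonicity-type bound for the linearization error
`e_f(v,t) = f v - (f t + f' t (v - t))`. -/
theorem stmt8 (R : ℝ) (hR : 0 < R) (f f' : ℝ → ℝ)
    (hderiv : ∀ t ∈ Ico (0:ℝ) R, HasDerivWithinAt f (f' t) (Ico 0 R) t)
    (hcont : ContinuousOn f' (Ico 0 R))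
    (h2conv : ConvexOn ℝ (Ico 0 R) f')
    (h2mono : StrictMonoOn f' (Ico 0 R))
    (e : ℝ → ℝ → ℝ) (he : ∀ v t, e v t = f v - (f t + f' t * (v - t)))
    (a b s t : ℝ) (hb : 0 ≤ b) (hbt : b ≤ t) (ha : 0 ≤ a) (has : a ≤ s)
    (hts : t + s < R) (hs : s ≠ 0) :
    e (a + b) b ≤ max (e (t + s) t) ((1 / 2) * ((f' (t + s) - f' t) / s) * a ^ 2) :=
  stmt8_general R f f' hderiv h2conv e he a b s t hb hbt ha has hts
end

section
/- Let f be a majorant function on [0,R) satisfying (h4) with β := sup{-f(t): t∈[0,R)}. For 0 ≤ ρ < β/2, the function g:[0,R-ρ)→ℝ defined by g(t) := (-1/f'(ρ))·[f(t+ρ) + 2ρ] is again a majorant function: g(0) > 0, g'(0) = -1, g' is convex and strictly increasing on [0,R-ρ), and g(t) < 0 for some t ∈ (0, R-ρ). -/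
/-!
Since `f' ≥ f' 0 = -1`, we have `f t ≥ f 0 - t`. Choosing `t̄` with `f t̄ < -2ρ` (possible as
`2ρ < β`) forces `t̄ > ρ` and `f ρ > -ρ ≥ -2ρ > f t̄`; as `f` is convex, this drop of `f` to the
right of `ρ` gives `f' ρ < 0`. So `g` is a positive multiple of a shift of `f + 2ρ`, with
`g 0 > 0` because `f ρ + 2ρ > ρ ≥ 0`, and `g (t̄ - ρ) < 0`.
-/

open Set

section

variable {f f' : ℝ → ℝ} {s : Set ℝ}

theorem Convex.mul_sub_le_sub_of_hasDerivWithinAt (hs : Convex ℝ s)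
    (hf : ∀ t ∈ s, HasDerivWithinAt f (f' t) s t) {C : ℝ} (hC : ∀ t ∈ s, C ≤ f' t)
    {x y : ℝ} (hx : x ∈ s) (hy : y ∈ s) (hxy : x ≤ y) : C * (y - x) ≤ f y - f x := by
  have hf_at : ∀ t ∈ interior s, HasDerivAt f (f' t) t := fun t ht =>
    (hf t (interior_subset ht)).hasDerivAt (mem_interior_iff_mem_nhds.1 ht)
  exact hs.mul_sub_le_image_sub_of_le_deriv (fun t ht => (hf t ht).continuousWithinAt)
    (fun t ht => (hf_at t ht).differentiableAt.differentiableWithinAt)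
    (fun t ht => (hf_at t ht).deriv ▸ hC t (interior_subset ht)) x hx y hy hxy

theorem MonotoneOn.neg_of_hasDerivWithinAt_of_lt (hf' : MonotoneOn f' s) (hs : Convex ℝ s)
    (hf : ∀ t ∈ s, HasDerivWithinAt f (f' t) s t) {x y : ℝ} (hx : x ∈ s) (hy : y ∈ s)
    (hxy : x ≤ y) (hlt : f y < f x) : f' x < 0 := by
  by_contra! hnonneg
  have := (hs.inter (convex_Ici x)).mul_sub_le_sub_of_hasDerivWithinAt
    (fun t ht => (hf t ht.1).mono inter_subset_left) (fun t ht => hf' hx ht.1 ht.2)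
    ⟨hx, self_mem_Ici⟩ ⟨hy, hxy⟩ hxy
  nlinarith [mul_nonneg hnonneg (sub_nonneg.2 hxy)]

theorem HasDerivWithinAt.comp_add_const_of_mapsTo {t : Set ℝ} {a x d : ℝ}
    (hf : HasDerivWithinAt f d s (x + a)) (hst : MapsTo (· + a) t s) :
    HasDerivWithinAt (fun y => f (y + a)) d t x := by
  simpa [Function.comp_def] using hf.comp x ((hasDerivWithinAt_id x t).add_const a) hst

end

theorem stmt9_general (R : ℝ) (hR : 0 < R) (f f' : ℝ → ℝ)
    (hderiv : ∀ t ∈ Ico (0:ℝ) R, HasDerivWithinAt f (f' t) (Ico 0 R) t)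
    (h1 : 0 < f 0) (h1' : f' 0 = -1)
    (h2conv : ConvexOn ℝ (Ico 0 R) f')
    (h2mono : StrictMonoOn f' (Ico 0 R))
    (β : ℝ) (hβ : β = sSup ((fun t => -f t) '' Ico (0:ℝ) R))
    (ρ : ℝ) (hρ0 : 0 ≤ ρ) (hρ : ρ < β / 2)
    (g g' : ℝ → ℝ)
    (hg : ∀ t, g t = (-1 / f' ρ) * (f (t + ρ) + 2 * ρ))
    (hg' : ∀ t, g' t = (-1 / f' ρ) * f' (t + ρ)) :
    (∀ t ∈ Ico (0:ℝ) (R - ρ), HasDerivWithinAt g (g' t) (Ico 0 (R - ρ)) t) ∧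
      0 < g 0 ∧ g' 0 = -1 ∧
      ConvexOn ℝ (Ico (0:ℝ) (R - ρ)) g' ∧
      StrictMonoOn g' (Ico (0:ℝ) (R - ρ)) ∧
      (∃ t ∈ Ioo (0:ℝ) (R - ρ), g t < 0) := by
  have h0 : (0 : ℝ) ∈ Ico 0 R := left_mem_Ico.2 hR
  have hlb : ∀ t ∈ Ico 0 R, f 0 - t ≤ f t := fun t ht => by
    have := (convex_Ico 0 R).mul_sub_le_sub_of_hasDerivWithinAt hderiv (C := -1)
      (fun s hs => h1' ▸ h2mono.monotoneOn h0 hs hs.1) h0 ht ht.1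
    linarith
  obtain ⟨_, ⟨tb, htb, rfl⟩, hftb⟩ := exists_lt_of_lt_csSup ((nonempty_Ico.2 hR).image _)
    (show 2 * ρ < sSup ((fun t => -f t) '' Ico 0 R) by linarith)
  have hρtb : ρ < tb := by linarith [hlb tb htb]
  have hρ_mem : ρ ∈ Ico 0 R := ⟨hρ0, hρtb.trans htb.2⟩
  have hfρ : -ρ < f ρ := by linarith [hlb ρ hρ_mem]
  have hf'ρ : f' ρ < 0 := h2mono.monotoneOn.neg_of_hasDerivWithinAt_of_lt (convex_Ico 0 R)
    hderiv hρ_mem htb hρtb.le (by linarith)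
  have hc : 0 < -1 / f' ρ := div_pos_of_neg_of_neg (by norm_num) hf'ρ
  have hshift : MapsTo (· + ρ) (Ico 0 (R - ρ)) (Ico 0 R) := fun t ht =>
    ⟨by linarith [ht.1], by linarith [ht.2]⟩
  rw [funext hg, funext hg']
  refine ⟨fun t ht => ?_, ?_, ?_, ?_, ?_, ⟨tb - ρ, ⟨?_, ?_⟩, ?_⟩⟩
  · exact (((hderiv _ (hshift ht)).comp_add_const_of_mapsTo hshift).add_const _).const_mul _
  · simpa using mul_pos hc (show 0 < f ρ + 2 * ρ by linarith)
  · simp [hf'ρ.ne]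
  · refine ((h2conv.translate_left ρ).subset (fun t ht => ?_) (convex_Ico 0 (R - ρ))).smul hc.le
    rw [mem_preimage, add_comm]
    exact hshift ht
  · exact fun x hx y hy hxy => mul_lt_mul_of_pos_left
      (h2mono (hshift hx) (hshift hy) (by linarith)) hc
  · linarith
  · linarith [htb.2]
  · simpa using mul_neg_of_pos_of_neg hc (show f tb + 2 * ρ < 0 by linarith)

/-- for `0 ≤ ρ < β/2`, the function `g t = (-1/f' ρ)(f (t+ρ) + 2ρ)`
is again a majorant function on `[0, R-ρ)` satisfying (h4). -/
theorem stmt9 (R : ℝ) (hR : 0 < R) (f f' : ℝ → ℝ)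
    (hderiv : ∀ t ∈ Ico (0:ℝ) R, HasDerivWithinAt f (f' t) (Ico 0 R) t)
    (hcont : ContinuousOn f' (Ico 0 R))
    (h1 : 0 < f 0) (h1' : f' 0 = -1)
    (h2conv : ConvexOn ℝ (Ico 0 R) f')
    (h2mono : StrictMonoOn f' (Ico 0 R))
    (h3 : ∃ t ∈ Ioo (0:ℝ) R, f t = 0)
    (h4 : ∃ t ∈ Ioo (0:ℝ) R, f t < 0)
    (β : ℝ) (hβ : β = sSup ((fun t => -f t) '' Ico (0:ℝ) R))
    (ρ : ℝ) (hρ0 : 0 ≤ ρ) (hρ : ρ < β / 2)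
    (g g' : ℝ → ℝ)
    (hg : ∀ t, g t = (-1 / f' ρ) * (f (t + ρ) + 2 * ρ))
    (hg' : ∀ t, g' t = (-1 / f' ρ) * f' (t + ρ)) :
    (∀ t ∈ Ico (0:ℝ) (R - ρ), HasDerivWithinAt g (g' t) (Ico 0 (R - ρ)) t) ∧
      0 < g 0 ∧ g' 0 = -1 ∧
      ConvexOn ℝ (Ico (0:ℝ) (R - ρ)) g' ∧
      StrictMonoOn g' (Ico (0:ℝ) (R - ρ)) ∧
      (∃ t ∈ Ioo (0:ℝ) (R - ρ), g t < 0) :=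
  stmt9_general R hR f f' hderiv h1 h1' h2conv h2mono β hβ ρ hρ0 hρ g g' hg hg'
end

section
/- Fix γ>0, b>0 with bγ < 3 - 2√2 and f(t) = t/(1-γt) - 2t + b on [0,1/γ). Then with κ := sup_{0<t<1/γ}(-f(t))/t, one has κ = 1 - 2√(γb) - γb, and λ := sup{t∈[0,1/γ): κ+f'(t)<0} = b/(√(γb) + γb). -/
/-!
Write `c = √(γb)`, so `c² = γb`. For `0 < t < 1/γ`,
`γ (1 - γt) (κ₀ t + f t) = (γ(1+c)t - c)²` with `κ₀ = 1 - 2c - c²`, hence `-f t / t ≤ κ₀`, with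
equality at the double root `t* = c / (γ(1+c)) = b / (c + γb)`. Since `1 - γt* = 1/(1+c)`, the
condition `κ₀ + f' t < 0`, i.e. `1 / (1 - γt)² < (1+c)²`, holds exactly on `[0, t*)`.
-/

open Set

namespace InexactNewtonMajorant

variable {γ b c t : ℝ}

lemma neg_div_le (hγ : 0 < γ) (hcb : c ^ 2 = γ * b) (ht : 0 < t) (htγ : γ * t < 1) :
    -(t / (1 - γ * t) - 2 * t + b) / t ≤ 1 - 2 * c - γ * b := by
  have hs : 0 < 1 - γ * t := by linarith
  have hu : t / (1 - γ * t) * (1 - γ * t) = t := div_mul_cancel₀ _ hs.ne'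
  have hsq : γ * (1 - γ * t) * ((1 - 2 * c - γ * b) * t + (t / (1 - γ * t) - 2 * t + b)) =
      (γ * (1 + c) * t - c) ^ 2 := by
    linear_combination γ * hu - (1 - γ * t) ^ 2 * hcb
  have hD := nonneg_of_mul_nonneg_right (hsq ▸ sq_nonneg _) (mul_pos hγ hs)
  rw [div_le_iff₀ ht]
  linarith

noncomputable def criticalPoint (γ c : ℝ) : ℝ := c / (γ * (1 + c))

lemma div_add_mul_eq_criticalPoint (hγ : 0 < γ) (hc : 0 < c) (hcb : c ^ 2 = γ * b) :
    b / (c + γ * b) = criticalPoint γ c := by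
  rw [criticalPoint, div_eq_div_iff (by nlinarith) (by positivity)]
  linear_combination -hcb

lemma mul_criticalPoint (hγ : 0 < γ) (hc : 0 ≤ c) : γ * criticalPoint γ c = c / (1 + c) := by
  unfold criticalPoint
  field_simp

lemma neg_div_criticalPoint (hγ : 0 < γ) (hc : 0 < c) (hcb : c ^ 2 = γ * b) :
    -(criticalPoint γ c / (1 - γ * criticalPoint γ c) - 2 * criticalPoint γ c + b) /
      criticalPoint γ c = 1 - 2 * c - γ * b := by
  rw [mul_criticalPoint hγ hc.le]
  unfold criticalPoint
  field_simp
  linear_combination hcb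

lemma criticalPoint_pos (hγ : 0 < γ) (hc : 0 < c) : 0 < criticalPoint γ c := by
  unfold criticalPoint
  positivity

lemma mul_criticalPoint_lt_one (hγ : 0 < γ) (hc : 0 ≤ c) : γ * criticalPoint γ c < 1 := by
  rw [mul_criticalPoint hγ hc, div_lt_one (by linarith)]
  linarith

lemma isGreatest_neg_div (hγ : 0 < γ) (hc : 0 < c) (hcb : c ^ 2 = γ * b) :
    IsGreatest ((fun t => -(t / (1 - γ * t) - 2 * t + b) / t) '' Ioo 0 (1 / γ))
      (1 - 2 * c - γ * b) := by
  refine ⟨⟨criticalPoint γ c, ⟨criticalPoint_pos hγ hc, ?_⟩, neg_div_criticalPoint hγ hc hcb⟩, ?_⟩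
  · exact (lt_div_iff₀' hγ).2 (mul_criticalPoint_lt_one hγ hc.le)
  · rintro _ ⟨t, ⟨ht, htγ⟩, rfl⟩
    exact neg_div_le hγ hcb ht ((lt_div_iff₀' hγ).1 htγ)

lemma add_deriv_neg_iff (hγ : 0 < γ) (hc : 0 ≤ c) (hcb : c ^ 2 = γ * b) (htγ : γ * t < 1) :
    1 - 2 * c - γ * b + (1 / (1 - γ * t) ^ 2 - 2) < 0 ↔ t < criticalPoint γ c := by
  have hs : 0 < 1 - γ * t := by linarith
  calc 1 - 2 * c - γ * b + (1 / (1 - γ * t) ^ 2 - 2) < 0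
      ↔ (1 / (1 - γ * t)) ^ 2 < (1 + c) ^ 2 := by
        rw [one_div_pow, ← hcb]
        constructor <;> intro h <;> linarith
    _ ↔ 1 / (1 - γ * t) < 1 + c := pow_lt_pow_iff_left₀ (by positivity) (by linarith) two_ne_zero
    _ ↔ γ * (1 + c) * t < c := by
        rw [div_lt_iff₀ hs]
        constructor <;> intro h <;> linarith
    _ ↔ t < criticalPoint γ c := by
        rw [criticalPoint, lt_div_iff₀ (by positivity)]
        constructor <;> intro h <;> linarith

lemma sep_add_deriv_neg_eq_Ico (hγ : 0 < γ) (hc : 0 ≤ c) (hcb : c ^ 2 = γ * b) :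
    {t ∈ Ico 0 (1 / γ) | 1 - 2 * c - γ * b + (1 / (1 - γ * t) ^ 2 - 2) < 0} =
      Ico 0 (criticalPoint γ c) := by
  ext t
  simp only [mem_ofPred_eq, mem_Ico, lt_div_iff₀' hγ]
  constructor
  · rintro ⟨⟨ht, htγ⟩, hneg⟩
    exact ⟨ht, (add_deriv_neg_iff hγ hc hcb htγ).1 hneg⟩
  · rintro ⟨ht, htc⟩
    have htγ : γ * t < 1 :=
      (mul_lt_mul_of_pos_left htc hγ).trans (mul_criticalPoint_lt_one hγ hc)
    exact ⟨⟨ht, htγ⟩, (add_deriv_neg_iff hγ hc hcb htγ).2 htc⟩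

end InexactNewtonMajorant

open InexactNewtonMajorant

theorem stmt13_general (γ b : ℝ) (hγ : 0 < γ) (hb : 0 < b)
    (f f' : ℝ → ℝ)
    (hf : ∀ t, f t = t / (1 - γ * t) - 2 * t + b)
    (hf' : ∀ t, f' t = 1 / (1 - γ * t) ^ 2 - 2)
    (κ : ℝ) (hκ : κ = sSup ((fun t => -f t / t) '' Ioo (0:ℝ) (1 / γ))) :
    κ = 1 - 2 * Real.sqrt (γ * b) - γ * b ∧
      sSup {t ∈ Ico (0:ℝ) (1 / γ) | κ + f' t < 0} =
        b / (Real.sqrt (γ * b) + γ * b) := by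
  set c := Real.sqrt (γ * b)
  have hc : 0 < c := Real.sqrt_pos.2 (mul_pos hγ hb)
  have hcb : c ^ 2 = γ * b := Real.sq_sqrt (mul_pos hγ hb).le
  have hκc : κ = 1 - 2 * c - γ * b := by
    simpa only [hκ, hf] using (isGreatest_neg_div hγ hc hcb).csSup_eq
  refine ⟨hκc, ?_⟩
  simp only [hf', hκc]
  rw [sep_add_deriv_neg_eq_Ico hγ hc.le hcb, csSup_Ico (criticalPoint_pos hγ hc),
    div_add_mul_eq_criticalPoint hγ hc hcb]

/-- for `f t = t/(1-γt) - 2t + b` with `bγ < 3 - 2√2`: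
`κ = 1 - 2√(γb) - γb` and `λ = b/(√(γb) + γb)`. -/
theorem stmt13 (γ b : ℝ) (hγ : 0 < γ) (hb : 0 < b)
    (hbγ : b * γ < 3 - 2 * Real.sqrt 2)
    (f f' : ℝ → ℝ)
    (hf : ∀ t, f t = t / (1 - γ * t) - 2 * t + b)
    (hf' : ∀ t, f' t = 1 / (1 - γ * t) ^ 2 - 2)
    (κ : ℝ) (hκ : κ = sSup ((fun t => -f t / t) '' Ioo (0:ℝ) (1 / γ))) :
    κ = 1 - 2 * Real.sqrt (γ * b) - γ * b ∧
      sSup {t ∈ Ico (0:ℝ) (1 / γ) | κ + f' t < 0} =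
        b / (Real.sqrt (γ * b) + γ * b) :=
  stmt13_general γ b hγ hb f f' hf hf' κ hκ
end

section
/- Let X, Y be Banach spaces, C ⊂ Y a nonempty closed convex cone, F:Ω→Y continuously Fréchet differentiable, x₀ ∈ Ω with rge T_{x₀} = Y where T_{x₀}d := F'(x₀)d - C. Suppose f is a majorant function for F at x₀, i.e. B(x₀,R) ⊆ Ω and ‖T_{x₀}^{-1}[F'(y)-F'(x)]‖ ≤ f'(‖x-x₀‖+‖y-x‖) - f'(‖x-x₀‖) for admissible x,y, with f(0)>0, f'(0)=-1, f' convex increasing. Then for any x with ‖x-x₀‖ ≤ t < R one has ‖T_{x₀}^{-1}F'(x)‖ ≤ 2 + f'(t). -/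
open Set ENNReal Pointwise

/-- The (inner) norm of a set: `inf{‖v‖ : v ∈ A}`, with value `⊤` when `A = ∅`. -/
noncomputable def setNormE {Y : Type*} [NormedAddCommGroup Y] (A : Set Y) : ℝ≥0∞ :=
  ⨅ v ∈ A, (‖v‖₊ : ℝ≥0∞)

/-- The inner norm of a set-valued mapping. -/
noncomputable def opNormE {X Y : Type*} [NormedAddCommGroup X] [NormedAddCommGroup Y]
    (T : X → Set Y) : ℝ≥0∞ :=
  ⨆ d ∈ {d : X | (T d).Nonempty ∧ ‖d‖ ≤ 1}, setNormE (T d)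

/-! Writing `F'(x) = F'(x₀) + (F'(x) - F'(x₀))`, any solution `e` of
`F'(x₀) e - (F'(x) - F'(x₀)) d ∈ C` yields the solution `d + e` of `F'(x₀) (d + e) - F'(x) d ∈ C`,
so `‖T_{x₀}⁻¹ F'(x)‖ ≤ 1 + ‖T_{x₀}⁻¹ (F'(x) - F'(x₀))‖`. The majorant condition at the pair
`(x₀, x)` bounds the last term by `f'(‖x - x₀‖) - f'(0) = f'(‖x - x₀‖) + 1`, and `f'` is
increasing. -/

section InnerNorm

variable {X Y : Type*} [NormedAddCommGroup X] [NormedAddCommGroup Y]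

theorem setNormE_le_nnnorm_add_setNormE {A B : Set Y} (d : Y) (h : ∀ e ∈ B, d + e ∈ A) :
    setNormE A ≤ ‖d‖₊ + setNormE B := by
  simp only [setNormE, ENNReal.add_iInf]
  refine le_iInf₂ fun e he => iInf₂_le_of_le (d + e) (h e he) ?_
  exact_mod_cast nnnorm_add_le d e

theorem setNormE_le_opNormE {T : X → Set Y} {d : X} (hd : (T d).Nonempty) (hd1 : ‖d‖ ≤ 1) :
    setNormE (T d) ≤ opNormE T :=
  le_iSup₂_of_le (f := fun d (_ : d ∈ {d : X | (T d).Nonempty ∧ ‖d‖ ≤ 1}) => setNormE (T d))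
    d ⟨hd, hd1⟩ le_rfl

theorem opNormE_le_one_add_opNormE_sub {𝓕 : Type*} [FunLike 𝓕 X Y] [AddMonoidHomClass 𝓕 X Y]
    (A : 𝓕) (B : X → Y) (C : Set Y) :
    opNormE (fun d => {e | A e - B d ∈ C}) ≤
      1 + opNormE (fun d => {e | A e - (B d - A d) ∈ C}) := by
  have shift : ∀ d e, A (d + e) - B d = A e - (B d - A d) := fun d e => by
    rw [map_add]; abel
  refine iSup₂_le fun d ⟨⟨e, he⟩, hd1⟩ => ?_
  calc setNormE {e | A e - B d ∈ C}
      ≤ ‖d‖₊ + setNormE {e | A e - (B d - A d) ∈ C} :=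
        setNormE_le_nnnorm_add_setNormE d fun e he => by simpa only [mem_ofPred_eq, shift] using he
    _ ≤ 1 + opNormE (fun d => {e | A e - (B d - A d) ∈ C}) := by
        gcongr
        · exact_mod_cast (show ‖d‖₊ ≤ 1 from hd1)
        · refine setNormE_le_opNormE ⟨e - d, ?_⟩ hd1
          simpa only [mem_ofPred_eq, ← shift, add_sub_cancel] using he

end InnerNorm

theorem stmt18_general {X Y : Type*} [NormedAddCommGroup X] [NormedSpace ℝ X]
    [NormedAddCommGroup Y] [NormedSpace ℝ Y]
    (C : Set Y)
    (F' : X → X →L[ℝ] Y)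
    (x₀ : X)
    (R : ℝ)
    (f' : ℝ → ℝ)
    (h1' : f' 0 = -1)
    (h2mono : StrictMonoOn f' (Ico 0 R))
    (hmaj : ∀ x y : X, x ∈ Metric.ball x₀ R → y ∈ Metric.ball x₀ R →
      ‖x - x₀‖ + ‖y - x‖ < R →
      opNormE (fun d : X => {e : X | F' x₀ e - (F' y d - F' x d) ∈ C}) ≤
        ENNReal.ofReal (f' (‖x - x₀‖ + ‖y - x‖) - f' ‖x - x₀‖))
    (x : X) (t : ℝ) (hxt : ‖x - x₀‖ ≤ t) (htR : t < R) :
    opNormE (fun d : X => {e : X | F' x₀ e - F' x d ∈ C}) ≤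
      ENNReal.ofReal (2 + f' t) := by
  have hs : ‖x - x₀‖ < R := hxt.trans_lt htR
  have hR : 0 < R := (norm_nonneg _).trans_lt hs
  have hf's : f' 0 ≤ f' ‖x - x₀‖ :=
    h2mono.monotoneOn ⟨le_rfl, hR⟩ ⟨norm_nonneg _, hs⟩ (norm_nonneg _)
  have hf't : f' ‖x - x₀‖ ≤ f' t :=
    h2mono.monotoneOn ⟨norm_nonneg _, hs⟩ ⟨(norm_nonneg _).trans hxt, htR⟩ hxt
  have hmaj_x₀ := hmaj x₀ x (Metric.mem_ball_self hR) (mem_ball_iff_norm.mpr hs) (by simpa using hs)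
  simp only [sub_self, norm_zero, zero_add, h1', sub_neg_eq_add] at hmaj_x₀
  calc opNormE (fun d : X => {e : X | F' x₀ e - F' x d ∈ C})
      ≤ 1 + opNormE (fun d : X => {e : X | F' x₀ e - (F' x d - F' x₀ d) ∈ C}) :=
        opNormE_le_one_add_opNormE_sub (F' x₀) (F' x) C
    _ ≤ ENNReal.ofReal 1 + ENNReal.ofReal (f' ‖x - x₀‖ + 1) := by
        rw [ENNReal.ofReal_one]; gcongr
    _ ≤ ENNReal.ofReal (2 + f' t) := by
        rw [← ENNReal.ofReal_add zero_le_one (by linarith)]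
        exact ENNReal.ofReal_le_ofReal (by linarith)

/-- under Robinson's condition and the affine invariant majorant
condition, `‖T_{x₀}⁻¹ F'(x)‖ ≤ 2 + f'(t)` whenever `‖x - x₀‖ ≤ t < R`. -/
theorem stmt18 {X Y : Type*} [NormedAddCommGroup X] [NormedSpace ℝ X] [CompleteSpace X]
    [NormedAddCommGroup Y] [NormedSpace ℝ Y] [CompleteSpace Y]
    (Ω : Set X) (hΩ : IsOpen Ω)
    (C : Set Y) (hCne : C.Nonempty) (hCcl : IsClosed C) (hCconv : Convex ℝ C)
    (hCcone : ∀ c : ℝ, 0 ≤ c → ∀ y ∈ C, c • y ∈ C)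
    (F : X → Y) (F' : X → X →L[ℝ] Y)
    (hF : ∀ x ∈ Ω, HasFDerivAt F (F' x) x) (hF'cont : ContinuousOn F' Ω)
    (x₀ : X) (hx₀ : x₀ ∈ Ω)
    (hRobinson : ∀ y : Y, ∃ d : X, F' x₀ d - y ∈ C)
    (R : ℝ) (hR : 0 < R) (hball : Metric.ball x₀ R ⊆ Ω)
    (f f' : ℝ → ℝ)
    (hderiv : ∀ t ∈ Ico (0:ℝ) R, HasDerivWithinAt f (f' t) (Ico 0 R) t)
    (hcont : ContinuousOn f' (Ico 0 R))
    (h1 : 0 < f 0) (h1' : f' 0 = -1)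
    (h2conv : ConvexOn ℝ (Ico 0 R) f')
    (h2mono : StrictMonoOn f' (Ico 0 R))
    (hmaj : ∀ x y : X, x ∈ Metric.ball x₀ R → y ∈ Metric.ball x₀ R →
      ‖x - x₀‖ + ‖y - x‖ < R →
      opNormE (fun d : X => {e : X | F' x₀ e - (F' y d - F' x d) ∈ C}) ≤
        ENNReal.ofReal (f' (‖x - x₀‖ + ‖y - x‖) - f' ‖x - x₀‖))
    (x : X) (t : ℝ) (hxt : ‖x - x₀‖ ≤ t) (htR : t < R) :
    opNormE (fun d : X => {e : X | F' x₀ e - F' x d ∈ C}) ≤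
      ENNReal.ofReal (2 + f' t) :=
  stmt18_general C F' x₀ R f' h1' h2mono hmaj x t hxt htR
end

section
/- Let f be a majorant function for F at x₀ (affine invariant majorant condition with Robinson's condition rge T_{x₀} = Y). If y ∈ B(x₀,R) then ‖T_{x₀}^{-1}[-F(y)]‖ ≤ f(‖y-x₀‖) + 2‖y-x₀‖. -/
/-!
Write `N v = ‖T⁻¹ v‖` for the convex process `T d = F'(x₀) d - C`. It is sublinear,
`N (F'(x₀) d) ≤ ‖d‖`, and by the Robinson–Ursescu theorem (Baire category, then the iteration
from the proof of the open mapping theorem) `N v ≤ M ‖v‖`. With `u = y - x₀`, `zᵢ = x₀ + (i/n) u`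
and the error `ρₙ` of the left Riemann sum of `s ↦ F'(x₀ + s u) u`,
`-F y = -F x₀ + F'(x₀) (-u) + ∑ᵢ (F'(zᵢ) - F'(x₀)) (-u/n) + ρₙ`,
so the majorant condition gives `N (-F y) ≤ f 0 + ‖u‖ + ∑ᵢ (f'(i‖u‖/n) - f' 0) ‖u‖/n + M ‖ρₙ‖`.
As `f'` is increasing the sum is at most `f ‖u‖ - f 0 + ‖u‖`, and `ρₙ → 0` by uniform continuity
of `F'` on the segment.
-/

open Set ENNReal Pointwise

open Filter Topology

def Convex.toPointedCone {Y : Type*} [AddCommGroup Y] [Module ℝ Y] {C : Set Y}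
    (hconv : Convex ℝ C) (h0 : (0 : Y) ∈ C) (hsmul : ∀ c : ℝ, 0 ≤ c → ∀ y ∈ C, c • y ∈ C) :
    PointedCone ℝ Y where
  carrier := C
  add_mem' {a b} ha hb := by
    have := hsmul 2 zero_le_two _ (hconv ha hb (by norm_num : (0 : ℝ) ≤ 1 / 2)
      (by norm_num : (0 : ℝ) ≤ 1 / 2) (by norm_num))
    rwa [smul_add, smul_smul, smul_smul, show (2 : ℝ) * (1 / 2) = 1 by norm_num, one_smul,
      one_smul] at this
  zero_mem' := h0
  smul_mem' c y hy := hsmul c c.2 y hy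

@[simp]
lemma Convex.mem_toPointedCone {Y : Type*} [AddCommGroup Y] [Module ℝ Y] {C : Set Y}
    (hconv : Convex ℝ C) (h0 : (0 : Y) ∈ C) (hsmul : ∀ c : ℝ, 0 ≤ c → ∀ y ∈ C, c • y ∈ C)
    {y : Y} : y ∈ hconv.toPointedCone h0 hsmul ↔ y ∈ C :=
  Iff.rfl

section ConeInverse

variable {X Y : Type*} [NormedAddCommGroup X] [NormedSpace ℝ X]
  [NormedAddCommGroup Y] [NormedSpace ℝ Y] (A : X →L[ℝ] Y) (K : PointedCone ℝ Y)

/-- `‖T⁻¹ v‖` for the convex process `T d = A d - K`. -/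
noncomputable def coneInvNorm (v : Y) : ℝ≥0∞ :=
  setNormE {d | A d - v ∈ K}

variable {A K}

lemma coneInvNorm_le_of_mem {v : Y} {d : X} (h : A d - v ∈ K) :
    coneInvNorm A K v ≤ ENNReal.ofReal ‖d‖ := by
  rw [ofReal_norm]
  exact iInf₂_le d h

@[simp]
lemma coneInvNorm_zero : coneInvNorm A K 0 = 0 :=
  nonpos_iff_eq_zero.1 <| by simpa using coneInvNorm_le_of_mem (K := K) (A := A) (d := 0) (by simp)

lemma coneInvNorm_add_le (v w : Y) :
    coneInvNorm A K (v + w) ≤ coneInvNorm A K v + coneInvNorm A K w := by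
  refine ENNReal.le_iInf₂_add_iInf₂ fun d hd e he => ?_
  have hde : A (d + e) - (v + w) ∈ K := by
    simpa [map_add, add_sub_add_comm] using K.add_mem hd he
  calc coneInvNorm A K (v + w) ≤ ENNReal.ofReal ‖d + e‖ := coneInvNorm_le_of_mem hde
    _ ≤ ENNReal.ofReal (‖d‖ + ‖e‖) := ENNReal.ofReal_le_ofReal (norm_add_le d e)
    _ = ‖d‖₊ + ‖e‖₊ := by
      rw [ENNReal.ofReal_add (norm_nonneg _) (norm_nonneg _), ofReal_norm, ofReal_norm]; rfl

lemma coneInvNorm_sum_le {ι : Type*} (s : Finset ι) (v : ι → Y) :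
    coneInvNorm A K (∑ i ∈ s, v i) ≤ ∑ i ∈ s, coneInvNorm A K (v i) :=
  Finset.le_sum_of_subadditive _ coneInvNorm_zero.le coneInvNorm_add_le s v

lemma coneInvNorm_smul_le {t : ℝ} (ht : 0 ≤ t) (v : Y) :
    coneInvNorm A K (t • v) ≤ ENNReal.ofReal t * coneInvNorm A K v := by
  rcases ht.eq_or_lt with rfl | ht
  · simp
  conv_rhs => rw [coneInvNorm, setNormE, ENNReal.mul_iInf_of_ne (by simpa using ht) ofReal_ne_top]
  refine le_iInf fun d => ?_
  rw [ENNReal.mul_iInf_of_ne (by simpa using ht) ofReal_ne_top]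
  refine le_iInf fun hd => ?_
  have htd : A (t • d) - t • v ∈ K := by
    simpa [map_smul, smul_sub] using K.smul_mem ht.le hd
  calc coneInvNorm A K (t • v) ≤ ENNReal.ofReal ‖t • d‖ := coneInvNorm_le_of_mem htd
    _ = ENNReal.ofReal t * ‖d‖₊ := by
      rw [norm_smul, Real.norm_of_nonneg ht.le, ENNReal.ofReal_mul ht.le, ofReal_norm]
      rfl

lemma coneInvNorm_apply_le_of_opNormE_le (hsurj : ∀ v, ∃ d, A d - v ∈ K) {L : X →L[ℝ] Y} {c : ℝ}
    (hL : opNormE (fun d => {e | A e - L d ∈ K}) ≤ ENNReal.ofReal c) (w : X) :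
    coneInvNorm A K (L w) ≤ ENNReal.ofReal (c * ‖w‖) := by
  rcases eq_or_ne w 0 with rfl | hw
  · simp
  have hw' : 0 < ‖w‖ := norm_pos_iff.2 hw
  have hunit : coneInvNorm A K (L (‖w‖⁻¹ • w)) ≤ ENNReal.ofReal c :=
    le_trans (le_iSup₂ (f := fun d _ => coneInvNorm A K (L d)) (‖w‖⁻¹ • w)
      ⟨hsurj _, by rw [norm_smul, norm_inv, norm_norm, inv_mul_cancel₀ hw'.ne']⟩) hL
  calc coneInvNorm A K (L w) = coneInvNorm A K (‖w‖ • L (‖w‖⁻¹ • w)) := by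
        rw [map_smul, smul_smul, mul_inv_cancel₀ hw'.ne', one_smul]
    _ ≤ ENNReal.ofReal ‖w‖ * ENNReal.ofReal c := (coneInvNorm_smul_le hw'.le _).trans (by gcongr)
    _ = ENNReal.ofReal (c * ‖w‖) := by rw [mul_comm, ← ENNReal.ofReal_mul' hw'.le]

lemma coneInvNorm_neg_le_of_riemannSum (a b : Y) (u : X) (L : ℕ → X →L[ℝ] Y) {n : ℕ}
    (hn : n ≠ 0) :
    coneInvNorm A K (-b) ≤ coneInvNorm A K (-a) + ENNReal.ofReal ‖u‖ +
      ∑ i ∈ Finset.range n, coneInvNorm A K ((L i - A) (-((n : ℝ)⁻¹ • u))) +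
      coneInvNorm A K (∑ i ∈ Finset.range n, (n : ℝ)⁻¹ • L i u - (b - a)) := by
  have hn0 : (n : ℝ) ≠ 0 := Nat.cast_ne_zero.2 hn
  have hsum : ∑ i ∈ Finset.range n, (L i - A) (-((n : ℝ)⁻¹ • u)) =
      A u - ∑ i ∈ Finset.range n, (n : ℝ)⁻¹ • L i u := by
    rw [Finset.sum_congr rfl fun i _ => show (L i - A) (-((n : ℝ)⁻¹ • u)) =
        (n : ℝ)⁻¹ • A u - (n : ℝ)⁻¹ • L i u by simp; abel,
      Finset.sum_sub_distrib, Finset.sum_const, Finset.card_range, ← Nat.cast_smul_eq_nsmul ℝ,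
      smul_smul, mul_inv_cancel₀ hn0, one_smul]
  have hdecomp : -b = -a + A (-u) + ∑ i ∈ Finset.range n, (L i - A) (-((n : ℝ)⁻¹ • u)) +
      (∑ i ∈ Finset.range n, (n : ℝ)⁻¹ • L i u - (b - a)) := by
    rw [hsum, map_neg]
    abel
  have hAu : coneInvNorm A K (A (-u)) ≤ ENNReal.ofReal ‖u‖ :=
    (coneInvNorm_le_of_mem (by rw [sub_self]; exact K.zero_mem)).trans_eq (by rw [norm_neg])
  rw [hdecomp]
  refine (coneInvNorm_add_le _ _).trans (add_le_add_left ?_ _)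
  refine (coneInvNorm_add_le _ _).trans (add_le_add ?_ (coneInvNorm_sum_le _ _))
  exact (coneInvNorm_add_le _ _).trans (add_le_add_right hAu _)

end ConeInverse

section RobinsonUrsescu

variable {X Y : Type*} [NormedAddCommGroup X] [NormedSpace ℝ X]
  [NormedAddCommGroup Y] [NormedSpace ℝ Y] {A : X →L[ℝ] Y} {K : PointedCone ℝ Y}

variable (A K) in
/-- The image of `closedBall 0 r` under the convex process `d ↦ A d - K`. -/
def processImageBall (r : ℝ) : Set Y :=
  {w | ∃ d, ‖d‖ ≤ r ∧ A d - w ∈ K}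

lemma add_mem_processImageBall {r s : ℝ} {v w : Y} (hv : v ∈ processImageBall A K r)
    (hw : w ∈ processImageBall A K s) : v + w ∈ processImageBall A K (r + s) := by
  obtain ⟨d, hd, hdv⟩ := hv
  obtain ⟨e, he, hew⟩ := hw
  exact ⟨d + e, (norm_add_le d e).trans (add_le_add hd he),
    by simpa [add_sub_add_comm] using K.add_mem hdv hew⟩

lemma smul_mem_processImageBall {r t : ℝ} (ht : 0 ≤ t) {w : Y}
    (hw : w ∈ processImageBall A K r) : t • w ∈ processImageBall A K (t * r) := by
  obtain ⟨d, hd, hdw⟩ := hw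
  exact ⟨t • d, by rw [norm_smul, Real.norm_of_nonneg ht]; gcongr,
    by simpa [smul_sub] using K.smul_mem ht hdw⟩

lemma exists_ball_subset_closure_processImageBall [CompleteSpace Y]
    (hsurj : ∀ v, ∃ d, A d - v ∈ K) :
    ∃ r ≥ 0, ∃ ε > 0, Metric.ball 0 ε ⊆ closure (processImageBall A K r) := by
  have hcover : ⋃ n : ℕ, closure (processImageBall A K n) = univ := by
    refine eq_univ_of_forall fun v => ?_
    obtain ⟨d, hd⟩ := hsurj v
    exact mem_iUnion.2 ⟨⌈‖d‖⌉₊, subset_closure ⟨d, Nat.le_ceil _, hd⟩⟩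
  obtain ⟨n, a, ha⟩ :=
    nonempty_interior_of_iUnion_of_closed (fun _ => isClosed_closure) hcover
  obtain ⟨ε, hε, hball⟩ := Metric.isOpen_iff.1 isOpen_interior a ha
  obtain ⟨d, hd⟩ := hsurj (-a)
  refine ⟨n + ‖d‖, by positivity, ε, hε, fun w hw => ?_⟩
  have haw : a + w ∈ closure (processImageBall A K n) :=
    interior_subset (hball (by simpa [dist_eq_norm] using hw))
  -- Baire gives a ball around some `a`; translating by `-a ∈ processImageBall A K ‖d‖` centres it.
  simpa using map_mem_closure (f := (· + -a)) (continuous_add_const _) haw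
    fun v hv => add_mem_processImageBall hv ⟨d, le_rfl, hd⟩

lemma exists_approx_processImageBall [CompleteSpace Y] (hsurj : ∀ v, ∃ d, A d - v ∈ K) :
    ∃ c ≥ 0, ∀ z : Y, ∃ w ∈ processImageBall A K (c * ‖z‖), ‖z - w‖ ≤ ‖z‖ / 2 := by
  obtain ⟨r, hr, ε, hε, hball⟩ := exists_ball_subset_closure_processImageBall hsurj
  refine ⟨2 * r / ε, by positivity, fun z => ?_⟩
  rcases eq_or_ne z 0 with rfl | hz
  · exact ⟨0, ⟨0, by simp, by simp⟩, by simp⟩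
  have hz' : 0 < ‖z‖ := norm_pos_iff.2 hz
  set t := 2 * ‖z‖ / ε with ht_def
  have ht : 0 < t := by positivity
  have hzt : t⁻¹ • z ∈ Metric.ball (0 : Y) ε := by
    rw [mem_ball_zero_iff, norm_smul, norm_inv, Real.norm_of_nonneg ht.le, ht_def]
    field_simp
    linarith
  obtain ⟨w, hw, hzw⟩ := Metric.mem_closure_iff.1 (hball hzt) (ε / 4) (by positivity)
  refine ⟨t • w, ?_, ?_⟩
  · convert smul_mem_processImageBall ht.le hw using 2
    rw [ht_def]
    ring
  · calc ‖z - t • w‖ = ‖t • (t⁻¹ • z - w)‖ := by rw [smul_sub, smul_inv_smul₀ ht.ne']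
      _ = t * ‖t⁻¹ • z - w‖ := by rw [norm_smul, Real.norm_of_nonneg ht.le]
      _ ≤ t * (ε / 4) := by
          rw [dist_eq_norm] at hzw
          gcongr
      _ = ‖z‖ / 2 := by
          rw [ht_def]
          field_simp
          ring

lemma mem_processImageBall_of_approx [CompleteSpace X] (hK : IsClosed (K : Set Y)) {c : ℝ}
    (hc : 0 ≤ c) (happrox : ∀ z : Y, ∃ w ∈ processImageBall A K (c * ‖z‖), ‖z - w‖ ≤ ‖z‖ / 2)
    (v : Y) : v ∈ processImageBall A K (2 * c * ‖v‖) := by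
  choose w hw hzw using happrox
  choose d hd hdw using hw
  set z : ℕ → Y := fun k => (fun x => x - w x)^[k] v
  have hz_succ : ∀ k, z (k + 1) = z k - w (z k) := fun k =>
    Function.iterate_succ_apply' _ _ _
  have hz_norm : ∀ k, ‖z k‖ ≤ ‖v‖ / 2 ^ k := by
    intro k
    induction k with
    | zero => simp [z]
    | succ k ih =>
      rw [hz_succ, pow_succ, ← div_div]
      exact (hzw _).trans (by gcongr)
  have hd_norm : ∀ k, ‖d (z k)‖ ≤ 2 * c * ‖v‖ / 2 / 2 ^ k := fun k =>
    calc ‖d (z k)‖ ≤ c * ‖z k‖ := hd _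
      _ ≤ c * (‖v‖ / 2 ^ k) := by gcongr; exact hz_norm k
      _ = 2 * c * ‖v‖ / 2 / 2 ^ k := by ring
  have hgeom := hasSum_geometric_two' (2 * c * ‖v‖)
  have hd_sum : Summable fun k => d (z k) := Summable.of_norm_bounded hgeom.summable hd_norm
  refine ⟨∑' k, d (z k), tsum_of_norm_bounded hgeom hd_norm, ?_⟩
  have hpartial : ∀ n, A (∑ k ∈ Finset.range n, d (z k)) - (v - z n) ∈ K := by
    intro n
    have hw_sum : v - z n = ∑ k ∈ Finset.range n, w (z k) := by
      change z 0 - z n = _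
      rw [← Finset.sum_range_sub' z n]
      exact Finset.sum_congr rfl fun k _ => by rw [hz_succ]; abel
    rw [hw_sum, map_sum, ← Finset.sum_sub_distrib]
    exact K.sum_mem fun k _ => hdw _
  have hz_lim : Tendsto z atTop (𝓝 0) := by
    refine squeeze_zero_norm hz_norm ?_
    simpa [div_eq_mul_inv, inv_pow] using
      (tendsto_pow_atTop_nhds_zero_of_lt_one (by norm_num : (0:ℝ) ≤ 2⁻¹) (by norm_num)).const_mul ‖v‖
  have hlim := ((A.continuous.tendsto _).comp hd_sum.hasSum.tendsto_sum_nat).sub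
    ((tendsto_const_nhds (x := v)).sub hz_lim)
  rw [sub_zero] at hlim
  exact hK.mem_of_tendsto hlim (Eventually.of_forall hpartial)

/-- Robinson–Ursescu theorem for the convex process `d ↦ A d - K`. -/
theorem exists_coneInvNorm_le_mul_norm [CompleteSpace X] [CompleteSpace Y]
    (hK : IsClosed (K : Set Y)) (hsurj : ∀ v, ∃ d, A d - v ∈ K) :
    ∃ M ≥ 0, ∀ v, coneInvNorm A K v ≤ ENNReal.ofReal (M * ‖v‖) := by
  obtain ⟨c, hc, happrox⟩ := exists_approx_processImageBall hsurj
  refine ⟨2 * c, by positivity, fun v => ?_⟩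
  obtain ⟨d, hd, hdv⟩ := mem_processImageBall_of_approx hK hc happrox v
  exact (coneInvNorm_le_of_mem hdv).trans (ENNReal.ofReal_le_ofReal hd)

end RobinsonUrsescu

section RiemannSums

variable {E : Type*} [NormedAddCommGroup E] [NormedSpace ℝ E]

lemma norm_sub_sub_smul_le_of_hasDerivWithinAt {g g' : ℝ → E} {a b κ : ℝ} (hab : a ≤ b)
    (hg : ∀ s ∈ Icc a b, HasDerivWithinAt g (g' s) (Icc a b) s)
    (hκ : ∀ s ∈ Icc a b, ‖g' s - g' a‖ ≤ κ) :
    ‖g b - g a - (b - a) • g' a‖ ≤ κ * (b - a) := by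
  have hφ : ∀ s ∈ Icc a b,
      HasDerivWithinAt (fun t => g t - t • g' a) (g' s - g' a) (Icc a b) s := fun s hs =>
    (hg s hs).sub (by simpa using (hasDerivWithinAt_id s _).smul_const (g' a))
  have := Convex.norm_image_sub_le_of_norm_hasDerivWithin_le hφ hκ (convex_Icc a b)
    (left_mem_Icc.2 hab) (right_mem_Icc.2 hab)
  rw [Real.norm_of_nonneg (sub_nonneg.2 hab)] at this
  convert this using 2
  rw [sub_smul]
  abel

theorem tendsto_sum_smul_deriv {g g' : ℝ → E} (hg : ∀ s ∈ Icc (0 : ℝ) 1, HasDerivWithinAt g (g' s) (Icc 0 1) s)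
    (hg' : ContinuousOn g' (Icc 0 1)) :
    Tendsto (fun n : ℕ => ∑ i ∈ Finset.range n, (n : ℝ)⁻¹ • g' (i / n)) atTop
      (𝓝 (g 1 - g 0)) := by
  rw [Metric.tendsto_atTop]
  intro ε hε
  obtain ⟨δ, hδ, hg'δ⟩ := Metric.uniformContinuousOn_iff_le.1
    (isCompact_Icc.uniformContinuousOn_of_continuous hg') (ε / 2) (by positivity)
  obtain ⟨N, hN⟩ := exists_nat_one_div_lt hδ
  refine ⟨N + 1, fun n hn => ?_⟩
  have hn0 : (0 : ℝ) < n := by exact_mod_cast Nat.succ_pos N |>.trans_le hn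
  have hnδ : (n : ℝ)⁻¹ ≤ δ := by
    rw [← one_div]
    refine le_trans ?_ hN.le
    gcongr
    exact_mod_cast hn
  have hpiece : ∀ i ∈ Finset.range n,
      ‖g ((i + 1) / n) - g (i / n) - (n : ℝ)⁻¹ • g' (i / n)‖ ≤ ε / 2 * (n : ℝ)⁻¹ := by
    intro i hi
    have hi : (i : ℝ) + 1 ≤ n := by exact_mod_cast Finset.mem_range.1 hi
    have hlen : ((i : ℝ) + 1) / n - i / n = (n : ℝ)⁻¹ := by field_simp; ring
    have hsub : Icc ((i : ℝ) / n) ((i + 1) / n) ⊆ Icc 0 1 :=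
      Icc_subset_Icc (by positivity) ((div_le_one hn0).2 hi)
    have hab : (i : ℝ) / n ≤ (i + 1) / n := by gcongr; linarith
    have := norm_sub_sub_smul_le_of_hasDerivWithinAt hab
      (fun s hs => (hg s (hsub hs)).mono hsub)
      (fun s hs => by
        rw [← dist_eq_norm]
        refine hg'δ s (hsub hs) _ (hsub (left_mem_Icc.2 hab)) ?_
        rw [Real.dist_eq, abs_of_nonneg (by linarith [hs.1])]
        linarith [hs.2])
    rwa [hlen] at this
  have htele : g 1 - g 0 = ∑ i ∈ Finset.range n, (g ((i + 1) / n) - g (i / n)) := by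
    have := Finset.sum_range_sub (fun i : ℕ => g (i / n)) n
    push_cast at this
    simp [this, hn0.ne']
  calc dist (∑ i ∈ Finset.range n, (n : ℝ)⁻¹ • g' (i / n)) (g 1 - g 0)
      = ‖∑ i ∈ Finset.range n, (g ((i + 1) / n) - g (i / n) - (n : ℝ)⁻¹ • g' (i / n))‖ := by
        rw [dist_eq_norm', htele, ← Finset.sum_sub_distrib]
    _ ≤ ∑ _i ∈ Finset.range n, ε / 2 * (n : ℝ)⁻¹ := norm_sum_le_of_le _ hpiece
    _ = ε / 2 := by
        rw [Finset.sum_const, Finset.card_range, nsmul_eq_mul]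
        field_simp
    _ < ε := half_lt_self hε

lemma mul_sub_le_sub_of_monotoneOn_deriv {f f' : ℝ → ℝ} {a b : ℝ} (hab : a ≤ b)
    (hf : ∀ t ∈ Icc a b, HasDerivWithinAt f (f' t) (Icc a b) t)
    (hf' : MonotoneOn f' (Icc a b)) :
    f' a * (b - a) ≤ f b - f a := by
  have hderiv : ∀ t ∈ Ioo a b, HasDerivAt f (f' t) t := fun t ht =>
    (hf t (Ioo_subset_Icc_self ht)).hasDerivAt (Icc_mem_nhds ht.1 ht.2)
  refine (convex_Icc a b).mul_sub_le_image_sub_of_le_deriv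
    (fun t ht => (hf t ht).continuousWithinAt)
    (by rw [interior_Icc]; exact fun t ht => (hderiv t ht).differentiableAt.differentiableWithinAt)
    (fun t ht => ?_) a (left_mem_Icc.2 hab) b (right_mem_Icc.2 hab) hab
  rw [interior_Icc] at ht
  rw [(hderiv t ht).deriv]
  exact hf' (left_mem_Icc.2 hab) (Ioo_subset_Icc_self ht) ht.1.le

lemma sum_deriv_mul_le_sub {f f' : ℝ → ℝ} {r : ℝ} (hr : 0 ≤ r) {n : ℕ} (hn : n ≠ 0)
    (hf : ∀ t ∈ Icc 0 r, HasDerivWithinAt f (f' t) (Icc 0 r) t)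
    (hf' : MonotoneOn f' (Icc 0 r)) :
    ∑ i ∈ Finset.range n, f' (i / n * r) * (r / n) ≤ f r - f 0 := by
  have hn0 : (0 : ℝ) < n := by positivity
  calc ∑ i ∈ Finset.range n, f' (i / n * r) * (r / n)
      ≤ ∑ i ∈ Finset.range n, (f ((i + 1) / n * r) - f (i / n * r)) := by
        refine Finset.sum_le_sum fun i hi => ?_
        have hi : (i : ℝ) + 1 ≤ n := by exact_mod_cast Finset.mem_range.1 hi
        have hsub : Icc ((i : ℝ) / n * r) ((i + 1) / n * r) ⊆ Icc 0 r :=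
          Icc_subset_Icc (by positivity)
            (mul_le_of_le_one_left hr ((div_le_one hn0).2 hi))
        have hab : (i : ℝ) / n * r ≤ (i + 1) / n * r := by gcongr; linarith
        have := mul_sub_le_sub_of_monotoneOn_deriv hab
          (fun t ht => (hf t (hsub ht)).mono hsub) (hf'.mono hsub)
        rwa [show ((i : ℝ) + 1) / n * r - i / n * r = r / n by ring] at this
    _ = f r - f 0 := by
        have := Finset.sum_range_sub (fun i : ℕ => f (i / n * r)) n
        push_cast at this
        simp [this, hn0.ne']

lemma sum_sub_deriv_mul_le {f f' : ℝ → ℝ} {r : ℝ} (hr : 0 ≤ r) {n : ℕ} (hn : n ≠ 0)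
    (hf : ∀ t ∈ Icc 0 r, HasDerivWithinAt f (f' t) (Icc 0 r) t)
    (hf' : MonotoneOn f' (Icc 0 r)) :
    ∑ i ∈ Finset.range n, (f' (i / n * r) - f' 0) * (r / n) ≤ f r - f 0 - f' 0 * r := by
  have hn0 : (n : ℝ) ≠ 0 := Nat.cast_ne_zero.2 hn
  have := sum_deriv_mul_le_sub hr hn hf hf'
  simp only [sub_mul, Finset.sum_sub_distrib, Finset.sum_const, Finset.card_range, nsmul_eq_mul]
  rw [show (n : ℝ) * (f' 0 * (r / n)) = f' 0 * r by field_simp]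
  linarith

end RiemannSums

section Majorant

variable {X Y : Type*} [NormedAddCommGroup X] [NormedSpace ℝ X]
  [NormedAddCommGroup Y] [NormedSpace ℝ Y]

theorem tendsto_sum_smul_fderiv_apply {Ω : Set X} {F : X → Y} {F' : X → X →L[ℝ] Y}
    (hF : ∀ x ∈ Ω, HasFDerivAt F (F' x) x) (hF' : ContinuousOn F' Ω) {x u : X}
    (hseg : ∀ s ∈ Icc (0 : ℝ) 1, x + s • u ∈ Ω) :
    Tendsto (fun n : ℕ => ∑ i ∈ Finset.range n, (n : ℝ)⁻¹ • F' (x + (i / n : ℝ) • u) u) atTop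
      (𝓝 (F (x + u) - F x)) := by
  have hpath : ∀ s : ℝ, HasDerivAt (fun t : ℝ => x + t • u) u s := fun s => by
    simpa using ((hasDerivAt_id s).smul_const u).const_add x
  have := tendsto_sum_smul_deriv (g := fun s => F (x + s • u)) (g' := fun s => F' (x + s • u) u)
    (fun s hs => ((hF _ (hseg s hs)).comp_hasDerivAt s (hpath s)).hasDerivWithinAt)
    ((hF'.comp (by fun_prop) hseg).clm_apply continuousOn_const)
  simpa using this

variable {K : PointedCone ℝ Y} {F : X → Y} {F' : X → X →L[ℝ] Y} {x₀ : X} {R M : ℝ}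
  {f f' : ℝ → ℝ}

lemma coneInvNorm_neg_le_add_riemann_error (hM0 : 0 ≤ M)
    (hM : ∀ v, coneInvNorm (F' x₀) K v ≤ ENNReal.ofReal (M * ‖v‖))
    (hf0 : 0 ≤ f 0) (hf'0 : f' 0 = -1)
    (hderiv : ∀ t ∈ Ico (0 : ℝ) R, HasDerivWithinAt f (f' t) (Ico 0 R) t)
    (hmono : MonotoneOn f' (Ico 0 R))
    (hstart : coneInvNorm (F' x₀) K (-F x₀) ≤ ENNReal.ofReal (f 0))
    (hslope : ∀ z ∈ Metric.ball x₀ R, ∀ w, coneInvNorm (F' x₀) K ((F' z - F' x₀) w) ≤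
      ENNReal.ofReal ((f' ‖z - x₀‖ - f' 0) * ‖w‖))
    {y : X} (hy : y ∈ Metric.ball x₀ R) {n : ℕ} (hn : n ≠ 0) :
    coneInvNorm (F' x₀) K (-F y) ≤ ENNReal.ofReal (f ‖y - x₀‖ + 2 * ‖y - x₀‖ +
      M * ‖∑ i ∈ Finset.range n, (n : ℝ)⁻¹ • F' (x₀ + (i / n : ℝ) • (y - x₀)) (y - x₀) -
        (F y - F x₀)‖) := by
  set u := y - x₀
  set r := ‖u‖
  have hr0 : 0 ≤ r := norm_nonneg u
  have hr : r < R := by simpa [dist_eq_norm] using hy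
  have hn0 : (0 : ℝ) < n := by positivity
  have hIcc : Icc 0 r ⊆ Ico 0 R := Icc_subset_Ico_right hr
  have hnode : ∀ i ∈ Finset.range n, i / n * r ∈ Icc 0 r := fun i hi =>
    ⟨by positivity, mul_le_of_le_one_left hr0
      ((div_le_one hn0).2 (by exact_mod_cast (Finset.mem_range.1 hi).le))⟩
  have hterm : ∀ i ∈ Finset.range n,
      coneInvNorm (F' x₀) K ((F' (x₀ + (i / n : ℝ) • u) - F' x₀) (-((n : ℝ)⁻¹ • u))) ≤
        ENNReal.ofReal ((f' (i / n * r) - f' 0) * (r / n)) := by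
    intro i hi
    have hzi : ‖(x₀ + (i / n : ℝ) • u) - x₀‖ = i / n * r := by simp [r, norm_smul]
    have hnorm : ‖-((n : ℝ)⁻¹ • u)‖ = r / n := by simp [norm_smul, r, div_eq_inv_mul]
    have := hslope _ (by rw [Metric.mem_ball, dist_eq_norm, hzi]; exact (hIcc (hnode i hi)).2)
      (-((n : ℝ)⁻¹ • u))
    rwa [hzi, hnorm] at this
  have hslope_nonneg : ∀ i ∈ Finset.range n, 0 ≤ (f' (i / n * r) - f' 0) * (r / n) :=
    fun i hi => mul_nonneg (sub_nonneg.2 (hmono (hIcc (left_mem_Icc.2 hr0)) (hIcc (hnode i hi))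
      (hnode i hi).1)) (by positivity)
  have hRiemann := sum_sub_deriv_mul_le hr0 hn
    (fun t ht => (hderiv t (hIcc ht)).mono hIcc) (hmono.mono hIcc)
  have hconst : f' 0 * r = -r := by rw [hf'0]; ring
  set ρ := ∑ i ∈ Finset.range n, (n : ℝ)⁻¹ • F' (x₀ + (i / n : ℝ) • u) u - (F y - F x₀)
  have hS := Finset.sum_nonneg hslope_nonneg
  calc coneInvNorm (F' x₀) K (-F y)
      ≤ ENNReal.ofReal (f 0) + ENNReal.ofReal r +
        ∑ i ∈ Finset.range n, ENNReal.ofReal ((f' (i / n * r) - f' 0) * (r / n)) +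
        ENNReal.ofReal (M * ‖ρ‖) :=
        (coneInvNorm_neg_le_of_riemannSum _ _ u _ hn).trans <|
          add_le_add (add_le_add (add_le_add_left hstart _) (Finset.sum_le_sum hterm)) (hM ρ)
    _ = ENNReal.ofReal (f 0 + r + ∑ i ∈ Finset.range n, (f' (i / n * r) - f' 0) * (r / n) +
        M * ‖ρ‖) := by
        rw [ENNReal.ofReal_add (by positivity) (by positivity), ENNReal.ofReal_add (by positivity) hS,
          ENNReal.ofReal_add hf0 hr0, ENNReal.ofReal_sum_of_nonneg hslope_nonneg]
    _ ≤ ENNReal.ofReal (f r + 2 * r + M * ‖ρ‖) := ENNReal.ofReal_le_ofReal (by linarith)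

theorem coneInvNorm_neg_le_of_majorant (hM0 : 0 ≤ M)
    (hM : ∀ v, coneInvNorm (F' x₀) K v ≤ ENNReal.ofReal (M * ‖v‖))
    (hf0 : 0 ≤ f 0) (hf'0 : f' 0 = -1)
    (hderiv : ∀ t ∈ Ico (0 : ℝ) R, HasDerivWithinAt f (f' t) (Ico 0 R) t)
    (hmono : MonotoneOn f' (Ico 0 R))
    (hstart : coneInvNorm (F' x₀) K (-F x₀) ≤ ENNReal.ofReal (f 0))
    (hslope : ∀ z ∈ Metric.ball x₀ R, ∀ w, coneInvNorm (F' x₀) K ((F' z - F' x₀) w) ≤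
      ENNReal.ofReal ((f' ‖z - x₀‖ - f' 0) * ‖w‖))
    (hF : ∀ x ∈ Metric.ball x₀ R, HasFDerivAt F (F' x) x)
    (hF' : ContinuousOn F' (Metric.ball x₀ R)) {y : X} (hy : y ∈ Metric.ball x₀ R) :
    coneInvNorm (F' x₀) K (-F y) ≤ ENNReal.ofReal (f ‖y - x₀‖ + 2 * ‖y - x₀‖) := by
  have hsum := tendsto_sum_smul_fderiv_apply hF hF' (x := x₀) (u := y - x₀) fun s hs =>
    (convex_ball x₀ R).add_smul_sub_mem (Metric.mem_ball_self (Metric.pos_of_mem_ball hy)) hy hs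
  rw [add_sub_cancel] at hsum
  have hlim := ENNReal.tendsto_ofReal <|
    ((hsum.sub_const (F y - F x₀)).norm.const_mul M).const_add (f ‖y - x₀‖ + 2 * ‖y - x₀‖)
  rw [sub_self, norm_zero, mul_zero, add_zero] at hlim
  exact ge_of_tendsto hlim <| (eventually_ne_atTop 0).mono fun n hn =>
    coneInvNorm_neg_le_add_riemann_error hM0 hM hf0 hf'0 hderiv hmono hstart hslope hy hn

end Majorant

theorem stmt19_general {X Y : Type*} [NormedAddCommGroup X] [NormedSpace ℝ X] [CompleteSpace X]
    [NormedAddCommGroup Y] [NormedSpace ℝ Y] [CompleteSpace Y]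
    (Ω : Set X)
    (C : Set Y) (hCcl : IsClosed C) (hCconv : Convex ℝ C)
    (hCcone : ∀ c : ℝ, 0 ≤ c → ∀ y ∈ C, c • y ∈ C)
    (F : X → Y) (F' : X → X →L[ℝ] Y)
    (hF : ∀ x ∈ Ω, HasFDerivAt F (F' x) x) (hF'cont : ContinuousOn F' Ω)
    (x₀ : X)
    (hRobinson : ∀ y : Y, ∃ d : X, F' x₀ d - y ∈ C)
    (R : ℝ) (hball : Metric.ball x₀ R ⊆ Ω)
    (f f' : ℝ → ℝ)
    (hderiv : ∀ t ∈ Ico (0:ℝ) R, HasDerivWithinAt f (f' t) (Ico 0 R) t)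
    (h1 : 0 < f 0) (h1' : f' 0 = -1)
    (h2mono : StrictMonoOn f' (Ico 0 R))
    (hstart : setNormE {d : X | F' x₀ d - (-(F x₀)) ∈ C} ≤ ENNReal.ofReal (f 0))
    (hmaj : ∀ x y : X, x ∈ Metric.ball x₀ R → y ∈ Metric.ball x₀ R →
      ‖x - x₀‖ + ‖y - x‖ < R →
      opNormE (fun d : X => {e : X | F' x₀ e - (F' y d - F' x d) ∈ C}) ≤
        ENNReal.ofReal (f' (‖x - x₀‖ + ‖y - x‖) - f' ‖x - x₀‖))
    (y : X) (hy : y ∈ Metric.ball x₀ R) :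
    setNormE {d : X | F' x₀ d - (-(F y)) ∈ C} ≤
      ENNReal.ofReal (f ‖y - x₀‖ + 2 * ‖y - x₀‖) := by
  have hC0 : (0 : Y) ∈ C := by
    obtain ⟨d, hd⟩ := hRobinson 0
    simpa using hCcone 0 le_rfl _ hd
  set K := hCconv.toPointedCone hC0 hCcone
  obtain ⟨M, hM0, hM⟩ := exists_coneInvNorm_le_mul_norm (K := K) hCcl hRobinson
  refine coneInvNorm_neg_le_of_majorant hM0 hM h1.le h1' hderiv h2mono.monotoneOn hstart
    (fun z hz => coneInvNorm_apply_le_of_opNormE_le hRobinson ?_)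
    (fun x hx => hF x (hball hx)) (hF'cont.mono hball) hy
  simpa [K] using hmaj x₀ z (Metric.mem_ball_self (Metric.pos_of_mem_ball hz)) hz
    (by simpa [dist_eq_norm] using hz)

/-- under the affine invariant majorant condition with Robinson's
condition, if `y ∈ B(x₀, R)` then `‖T_{x₀}⁻¹[-F(y)]‖ ≤ f(‖y-x₀‖) + 2‖y-x₀‖`. -/
theorem stmt19 {X Y : Type*} [NormedAddCommGroup X] [NormedSpace ℝ X] [CompleteSpace X]
    [NormedAddCommGroup Y] [NormedSpace ℝ Y] [CompleteSpace Y]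
    (Ω : Set X) (hΩ : IsOpen Ω)
    (C : Set Y) (hCne : C.Nonempty) (hCcl : IsClosed C) (hCconv : Convex ℝ C)
    (hCcone : ∀ c : ℝ, 0 ≤ c → ∀ y ∈ C, c • y ∈ C)
    (F : X → Y) (F' : X → X →L[ℝ] Y)
    (hF : ∀ x ∈ Ω, HasFDerivAt F (F' x) x) (hF'cont : ContinuousOn F' Ω)
    (x₀ : X) (hx₀ : x₀ ∈ Ω)
    (hRobinson : ∀ y : Y, ∃ d : X, F' x₀ d - y ∈ C)
    (R : ℝ) (hR : 0 < R) (hball : Metric.ball x₀ R ⊆ Ω)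
    (f f' : ℝ → ℝ)
    (hderiv : ∀ t ∈ Ico (0:ℝ) R, HasDerivWithinAt f (f' t) (Ico 0 R) t)
    (hcont : ContinuousOn f' (Ico 0 R))
    (h1 : 0 < f 0) (h1' : f' 0 = -1)
    (h2conv : ConvexOn ℝ (Ico 0 R) f')
    (h2mono : StrictMonoOn f' (Ico 0 R))
    (hstart : setNormE {d : X | F' x₀ d - (-(F x₀)) ∈ C} ≤ ENNReal.ofReal (f 0))
    (hmaj : ∀ x y : X, x ∈ Metric.ball x₀ R → y ∈ Metric.ball x₀ R →
      ‖x - x₀‖ + ‖y - x‖ < R →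
      opNormE (fun d : X => {e : X | F' x₀ e - (F' y d - F' x d) ∈ C}) ≤
        ENNReal.ofReal (f' (‖x - x₀‖ + ‖y - x‖) - f' ‖x - x₀‖))
    (y : X) (hy : y ∈ Metric.ball x₀ R) :
    setNormE {d : X | F' x₀ d - (-(F y)) ∈ C} ≤
      ENNReal.ofReal (f ‖y - x₀‖ + 2 * ‖y - x₀‖) :=
  stmt19_general Ω C hCcl hCconv hCcone F F' hF hF'cont x₀ hRobinson R hball f f' hderiv h1 h1'
    h2mono hstart hmaj y hy
end
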